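/- arXiv:1211.3461 — 6 statements merged into one kernel-verified Lean document; each statement's English description precedes it below -/
import Mathlib

section
/- For n ≥ 1, the orbit 𝒟(ℂ) of the diagonal tensor D under the action of G(ℂ) = GL(n,ℂ)×GL(n,ℂ)×GL(n,ℂ) is exactly the set of all n×n×n complex tensors that have complex tensor rank n and multilinear rank (n,n,n). -/
open scoped BigOperators
open Matrix

/-- An `n×n×n` tensor with entries in `K`. -/
abbrev Tensor (n : ℕ) (K : Type*) := Fin n × Fin n × Fin n → K

namespace Tensor

variable {n : ℕ} {K : Type*}

section CommRing
variable [CommRing K]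

/-- The right action of a triple of `n×n` matrices on an `n×n×n` tensor:
`(P(g₁,g₂,g₃))_{ijk} = Σ_{a,b,c} P_{abc} g₁(a,i) g₂(b,j) g₃(c,k)`. -/
def act (P : Tensor n K) (g₁ g₂ g₃ : Matrix (Fin n) (Fin n) K) : Tensor n K :=
  fun x => ∑ a, ∑ b, ∑ c, P (a, b, c) * g₁ a x.1 * g₂ b x.2.1 * g₃ c x.2.2

/-- The diagonal tensor `D`, with `D_{iii} = 1` and all other entries `0`. -/
def DT (n : ℕ) (K : Type*) [CommRing K] : Tensor n K :=
  fun x => if x.1 = x.2.1 ∧ x.2.1 = x.2.2 then 1 else 0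

/-- The orbit of the diagonal tensor `D` under `GL(n,K)×GL(n,K)×GL(n,K)`. -/
def orbitD (n : ℕ) (K : Type*) [CommRing K] : Set (Tensor n K) :=
  {P | ∃ g₁ g₂ g₃ : Matrix (Fin n) (Fin n) K,
    IsUnit g₁.det ∧ IsUnit g₂.det ∧ IsUnit g₃.det ∧ P = (DT n K).act g₁ g₂ g₃}

/-- `P` admits a decomposition as a sum of `r` rank-one tensors. -/
def HasRankLE (P : Tensor n K) (r : ℕ) : Prop :=
  ∃ u v w : Fin r → Fin n → K, P = fun x => ∑ l, u l x.1 * v l x.2.1 * w l x.2.2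

/-- The tensor rank of `P`: the smallest `r` such that `P` is a sum of `r` rank-one tensors. -/
noncomputable def rank (P : Tensor n K) : ℕ := sInf {r | P.HasRankLE r}

/-- The three flattenings of `P` to an `n²×n` matrix; the columns of `flatten i P` are
indexed by the `i`-th index of `P`. -/
def flatten (i : Fin 3) (P : Tensor n K) : Matrix (Fin n × Fin n) (Fin n) K :=
  ![Matrix.of fun p a => P (a, p.1, p.2),
    Matrix.of fun p b => P (p.1, b, p.2),
    Matrix.of fun p c => P (p.1, p.2, c)] i

/-- Contraction `P *_i v` of the `i`-th index of `P` against a vector `v`. -/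
def contr (i : Fin 3) (P : Tensor n K) (v : Fin n → K) : Matrix (Fin n) (Fin n) K :=
  ![Matrix.of fun j k => ∑ a, P (a, j, k) * v a,
    Matrix.of fun j k => ∑ b, P (j, b, k) * v b,
    Matrix.of fun j k => ∑ c, P (j, k, c) * v c] i

/-- The `j`-th `i`-slice of `P`, i.e. `P *_i e_j`. -/
def slice (i : Fin 3) (P : Tensor n K) (j : Fin n) : Matrix (Fin n) (Fin n) K :=
  contr i P (Pi.single j 1)

/-- The commutation relations in index `i`:
`(P*_i e_j)·adj(P*_i v)·(P*_i e_k) = (P*_i e_k)·adj(P*_i v)·(P*_i e_j)`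
for all `v` and all `j < k`. -/
def CommRel (i : Fin 3) (P : Tensor n K) : Prop :=
  ∀ (v : Fin n → K) (j k : Fin n), j < k →
    slice i P j * (contr i P v).adjugate * slice i P k
      = slice i P k * (contr i P v).adjugate * slice i P j

/-- The matrix `P *_i x`, where `x` is a vector of indeterminates. -/
noncomputable def contrX (i : Fin 3) (P : Tensor n K) :
    Matrix (Fin n) (Fin n) (MvPolynomial (Fin n) K) :=
  ![Matrix.of fun j k => ∑ a, MvPolynomial.C (P (a, j, k)) * MvPolynomial.X a,
    Matrix.of fun j k => ∑ b, MvPolynomial.C (P (j, b, k)) * MvPolynomial.X b,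
    Matrix.of fun j k => ∑ c, MvPolynomial.C (P (j, k, c)) * MvPolynomial.X c] i

/-- `h_i(P;x) = det (P *_i x)`, a polynomial in the indeterminates `x`. -/
noncomputable def hpoly (i : Fin 3) (P : Tensor n K) : MvPolynomial (Fin n) K :=
  (contrX i P).det

/-- The Hessian matrix of a polynomial in the indeterminates `x`. -/
noncomputable def hess (p : MvPolynomial (Fin n) K) :
    Matrix (Fin n) (Fin n) (MvPolynomial (Fin n) K) :=
  Matrix.of fun a b => MvPolynomial.pderiv a (MvPolynomial.pderiv b p)

/-- `f_i(P;x) = (-1)^(n-1) det (H_x (h_i(P;x)))`. -/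
noncomputable def fpoly (i : Fin 3) (P : Tensor n K) : MvPolynomial (Fin n) K :=
  (-1) ^ (n - 1) * (hess (hpoly i P)).det

/-- Substitution `x ↦ g x` in a polynomial in the indeterminates `x`. -/
noncomputable def substX (g : Matrix (Fin n) (Fin n) K) (p : MvPolynomial (Fin n) K) :
    MvPolynomial (Fin n) K :=
  MvPolynomial.aeval (fun j => ∑ k, MvPolynomial.C (g j k) * MvPolynomial.X k) p

end CommRing

/-- A complex tensor is real when all of its entries are real. -/
def IsReal (P : Tensor n ℂ) : Prop := ∀ x, (P x).im = 0

/-- The inclusion of real tensors into complex tensors. -/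
noncomputable def toC (n : ℕ) : Tensor n ℝ → Tensor n ℂ := fun P x => (P x : ℂ)

/-- The orbit `𝒟(ℝ)` of `D` under `GL(n,ℝ)³`, viewed inside the complex tensors. -/
def orbitDR (n : ℕ) : Set (Tensor n ℂ) := toC n '' orbitD n ℝ

/-- The border rank of `P`: the smallest `r` such that `P` is a limit of tensors of
rank at most `r`. -/
noncomputable def borderRank (P : Tensor n ℂ) : ℕ :=
  sInf {r | P ∈ closure {Q : Tensor n ℂ | Q.HasRankLE r}}

/-- The first nonzero entry of every row of `g` equals `1`. -/
def FirstNonzeroOne (g : Matrix (Fin n) (Fin n) ℂ) : Prop :=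
  ∀ r c : Fin n, g r c ≠ 0 → (∀ c' : Fin n, c' < c → g r c' = 0) → g r c = 1

/-- The first `2k` rows of `g` are non-real and not purely imaginary, and occur in complex
conjugate pairs (row `2j+1` conjugate to row `2j`); the remaining rows are real. -/
def ConjPairStructure (k : ℕ) (g : Matrix (Fin n) (Fin n) ℂ) : Prop :=
  (∀ m m' : Fin n, (m : ℕ) < 2 * k → Even (m : ℕ) → (m' : ℕ) = (m : ℕ) + 1 →
      ∀ c, g m' c = (starRingEnd ℂ) (g m c)) ∧
  (∀ m : Fin n, (m : ℕ) < 2 * k → (∃ c, (g m c).im ≠ 0) ∧ (∃ c, (g m c).re ≠ 0)) ∧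
  (∀ m : Fin n, 2 * k ≤ (m : ℕ) → ∀ c, (g m c).im = 0)

/-- A normalized decomposition `P = D(g₁,g₂,g₃)` exhibiting signature `(n-2k, k)`:
the first nonzero entry of every row of `g₁,g₂` is `1`, and each `gᵢ` has its first `2k`
rows non-real occurring in conjugate pairs, with the remaining rows real. -/
def SigDecomp (P : Tensor n ℂ) (k : ℕ) (g₁ g₂ g₃ : Matrix (Fin n) (Fin n) ℂ) : Prop :=
  2 * k ≤ n ∧ IsUnit g₁.det ∧ IsUnit g₂.det ∧ IsUnit g₃.det ∧
  P = (DT n ℂ).act g₁ g₂ g₃ ∧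
  FirstNonzeroOne g₁ ∧ FirstNonzeroOne g₂ ∧
  ConjPairStructure k g₁ ∧ ConjPairStructure k g₂ ∧ ConjPairStructure k g₃

/-- `P` has signature `(n-2k, k)`: its unique rank-`n` decomposition has exactly `2k`
non-real rank-one summands, occurring in conjugate pairs. -/
def HasSignature (P : Tensor n ℂ) (k : ℕ) : Prop :=
  ∃ g₁ g₂ g₃ : Matrix (Fin n) (Fin n) ℂ, SigDecomp P k g₁ g₂ g₃

/-- Cayley's hyperdeterminant of a `2×2×2` tensor. -/
noncomputable def Delta (P : Tensor 2 ℂ) : ℂ :=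
  (P (0,0,0) ^ 2 * P (1,1,1) ^ 2 + P (0,0,1) ^ 2 * P (1,1,0) ^ 2
    + P (0,1,0) ^ 2 * P (1,0,1) ^ 2 + P (0,1,1) ^ 2 * P (1,0,0) ^ 2)
  - 2 * (P (0,0,0) * P (0,0,1) * P (1,1,0) * P (1,1,1)
    + P (0,0,0) * P (0,1,0) * P (1,0,1) * P (1,1,1)
    + P (0,0,0) * P (0,1,1) * P (1,0,0) * P (1,1,1)
    + P (0,0,1) * P (0,1,0) * P (1,0,1) * P (1,1,0)
    + P (0,0,1) * P (0,1,1) * P (1,1,0) * P (1,0,0)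
    + P (0,1,0) * P (0,1,1) * P (1,0,1) * P (1,0,0))
  + 4 * (P (0,0,0) * P (0,1,1) * P (1,0,1) * P (1,1,0)
    + P (0,0,1) * P (0,1,0) * P (1,0,0) * P (1,1,1))

/-- The Levi-Civita symbol on three indices, `ε₁₂₃ = 1`. -/
noncomputable def eps (i j k : Fin 3) : ℂ :=
  if (i, j, k) = ((0 : Fin 3), (1 : Fin 3), (2 : Fin 3)) ∨ (i, j, k) = (1, 2, 0)
      ∨ (i, j, k) = (2, 0, 1) then 1
  else if (i, j, k) = ((2 : Fin 3), (1 : Fin 3), (0 : Fin 3)) ∨ (i, j, k) = (1, 0, 2)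
      ∨ (i, j, k) = (0, 2, 1) then -1
  else 0

/-- The degree-6 invariant `τ₃` of `3×3×3` tensors, given by a six-fold Levi-Civita
contraction. -/
noncomputable def tau3 (P : Tensor 3 ℂ) : ℂ :=
  ∑ i : Fin 3 × Fin 3 × Fin 3, ∑ j : Fin 3 × Fin 3 × Fin 3, ∑ k : Fin 3 × Fin 3 × Fin 3,
    ∑ l : Fin 3 × Fin 3 × Fin 3, ∑ m : Fin 3 × Fin 3 × Fin 3, ∑ o : Fin 3 × Fin 3 × Fin 3,
      P i * P j * P k * P l * P m * P o *
        eps i.1 j.1 k.1 * eps j.2.1 k.2.1 l.2.1 * eps k.2.2 l.2.2 m.2.2 *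
        eps l.1 m.1 o.1 * eps m.2.1 o.2.1 i.2.1 * eps o.2.2 i.2.2 j.2.2

end Tensor

/-!
A decomposition `P = ∑_{l<r} u_l ⊗ v_l ⊗ w_l` factors each flattening of `P` as the Khatri–Rao
product of two factor matrices times the third one, so every flattening has rank at most `r` and
at most the rank of the corresponding factor matrix. For `P = D(g₁,g₂,g₃)` the factor matrices are
the `gᵢ`, and the Khatri–Rao product of two invertible matrices has a left inverse; this gives
multilinear rank `(n,n,n)` and hence tensor rank `n`. Conversely, in a decomposition of length `n`
of a tensor of multilinear rank `(n,n,n)` all factor matrices are invertible, and such a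
decomposition is exactly `D` acted on by its factor matrices.
-/

namespace Matrix

variable {K : Type*} {l m p : Type*}

/-- The Khatri–Rao (column-wise Kronecker) product of `Bᵀ` and `Cᵀ`. -/
def khatriRao [Mul K] (B : Matrix l m K) (C : Matrix l p K) : Matrix (m × p) l K :=
  of fun q k => B k q.1 * C k q.2

variable [Field K] [Fintype l] [DecidableEq l]

theorem isUnit_of_rank_eq_card {A : Matrix l l K} (h : A.rank = Fintype.card l) : IsUnit A :=
  linearIndependent_cols_iff_isUnit.1 <| linearIndependent_iff_card_eq_finrank_span.2 <| by
    rw [Set.finrank, ← rank_eq_finrank_span_cols, h]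

theorem rank_eq_card_of_mul_eq_one [Fintype m] {A : Matrix m l K} {L : Matrix l m K}
    (h : L * A = 1) : A.rank = Fintype.card l :=
  le_antisymm A.rank_le_card_width <| by
    simpa only [h, rank_one] using rank_mul_le_right L A

theorem rank_khatriRao [Fintype m] [Fintype p] {B : Matrix l m K} {C : Matrix l p K}
    {B' : Matrix m l K} {C' : Matrix p l K} (hB : B * B' = 1) (hC : C * C' = 1) :
    (khatriRao B C).rank = Fintype.card l := by
  refine rank_eq_card_of_mul_eq_one (L := of fun k q => B' q.1 k * C' q.2 k) ?_
  ext k k'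
  have hBk := congr_fun₂ hB k' k
  have hCk := congr_fun₂ hC k' k
  simp only [mul_apply, one_apply] at hBk hCk
  simp only [mul_apply, of_apply, khatriRao, Fintype.sum_prod_type, one_apply]
  calc _ = (∑ i, B k' i * B' i k) * ∑ j, C k' j * C' j k := by
        rw [Finset.sum_mul_sum]
        exact Fintype.sum_congr _ _ fun i => Fintype.sum_congr _ _ fun j => by ring
    _ = _ := by rw [hBk, hCk]; by_cases h : k = k' <;> simp [h, eq_comm]

end Matrix

namespace Tensor

open Matrix

variable {K : Type*} {n r : ℕ}

section CommRing

variable [CommRing K]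

def sumOuter (u v w : Matrix (Fin r) (Fin n) K) : Tensor n K :=
  fun x => ∑ l, u l x.1 * v l x.2.1 * w l x.2.2

theorem act_DT (g₁ g₂ g₃ : Matrix (Fin n) (Fin n) K) :
    (DT n K).act g₁ g₂ g₃ = sumOuter g₁ g₂ g₃ := by
  ext ⟨i, j, k⟩
  simp [act, DT, sumOuter, ite_and]

theorem flatten_sumOuter (u v w : Matrix (Fin r) (Fin n) K) (i : Fin 3) :
    flatten i (sumOuter u v w)
      = ![khatriRao v w, khatriRao u w, khatriRao u v] i * ![u, v, w] i := by
  fin_cases i <;> ext q a <;>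
    simp [flatten, sumOuter, khatriRao, mul_apply, mul_comm, mul_left_comm]

theorem hasRankLE_card {ι : Type*} [Fintype ι] (u v w : ι → Fin n → K) :
    HasRankLE (fun x => ∑ l, u l x.1 * v l x.2.1 * w l x.2.2) (Fintype.card ι) := by
  let e := (Fintype.equivFin ι).symm
  exact ⟨u ∘ e, v ∘ e, w ∘ e, funext fun x => (e.sum_comp _).symm⟩

theorem hasRankLE_mul_self (P : Tensor n K) : P.HasRankLE (n * n) := by
  convert hasRankLE_card (ι := Fin n × Fin n) (fun q a => P (a, q.1, q.2))
    (fun q => Pi.single q.1 1) (fun q => Pi.single q.2 1) using 1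
  · funext x
    simp [Fintype.sum_prod_type, Pi.single_apply]
  · simp

theorem hasRankLE_rank (P : Tensor n K) : P.HasRankLE P.rank :=
  Nat.sInf_mem (s := {r | P.HasRankLE r}) ⟨_, hasRankLE_mul_self P⟩

theorem rank_le_of_hasRankLE {P : Tensor n K} (h : P.HasRankLE r) : P.rank ≤ r :=
  Nat.sInf_le h

end CommRing

variable [Field K]

theorem rank_flatten_sumOuter_le (i : Fin 3) (u v w : Matrix (Fin r) (Fin n) K) :
    (flatten i (sumOuter u v w)).rank ≤ (![u, v, w] i).rank :=
  flatten_sumOuter u v w i ▸ rank_mul_le_right _ _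

theorem rank_flatten_le_of_hasRankLE (i : Fin 3) {P : Tensor n K} (h : P.HasRankLE r) :
    (flatten i P).rank ≤ r := by
  obtain ⟨u, v, w, rfl⟩ := h
  exact (rank_flatten_sumOuter_le i u v w).trans (rank_le_height _)

theorem rank_flatten_le_rank (i : Fin 3) (P : Tensor n K) : (flatten i P).rank ≤ P.rank :=
  rank_flatten_le_of_hasRankLE i (hasRankLE_rank P)

theorem rank_flatten_sumOuter_of_isUnit (i : Fin 3) {g₁ g₂ g₃ : Matrix (Fin n) (Fin n) K}
    (h₁ : IsUnit g₁.det) (h₂ : IsUnit g₂.det) (h₃ : IsUnit g₃.det) :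
    (flatten i (sumOuter g₁ g₂ g₃)).rank = n := by
  have hKR {B C : Matrix (Fin n) (Fin n) K} (hB : IsUnit B.det) (hC : IsUnit C.det) :
      (khatriRao B C).rank = n := by
    simpa using rank_khatriRao (mul_nonsing_inv _ hB) (mul_nonsing_inv _ hC)
  rw [flatten_sumOuter]
  fin_cases i
  · exact (rank_mul_eq_left_of_isUnit_det g₁ _ h₁).trans (hKR h₂ h₃)
  · exact (rank_mul_eq_left_of_isUnit_det g₂ _ h₂).trans (hKR h₁ h₃)
  · exact (rank_mul_eq_left_of_isUnit_det g₃ _ h₃).trans (hKR h₁ h₂)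

theorem isUnit_det_of_rank_flatten_sumOuter (i : Fin 3) {u v w : Matrix (Fin n) (Fin n) K}
    (h : (flatten i (sumOuter u v w)).rank = n) : IsUnit (![u, v, w] i).det := by
  rw [← isUnit_iff_isUnit_det]
  apply isUnit_of_rank_eq_card
  rw [Fintype.card_fin]
  exact le_antisymm (rank_le_width _) (h.ge.trans (rank_flatten_sumOuter_le i u v w))

theorem orbitD_eq_setOf_rank :
    orbitD n K = {P | P.rank = n ∧ ∀ i : Fin 3, (flatten i P).rank = n} := by
  ext P
  constructor
  · rintro ⟨g₁, g₂, g₃, h₁, h₂, h₃, rfl⟩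
    rw [act_DT]
    have hflat i := rank_flatten_sumOuter_of_isUnit i h₁ h₂ h₃
    exact ⟨le_antisymm (rank_le_of_hasRankLE ⟨g₁, g₂, g₃, rfl⟩)
      ((hflat 0).ge.trans (rank_flatten_le_rank 0 _)), hflat⟩
  · rintro ⟨hrank, hflat⟩
    obtain ⟨u, v, w, rfl⟩ : P.HasRankLE n := by
      have := hasRankLE_rank P
      rwa [hrank] at this
    exact ⟨u, v, w, isUnit_det_of_rank_flatten_sumOuter 0 (hflat 0),
      isUnit_det_of_rank_flatten_sumOuter 1 (hflat 1),
      isUnit_det_of_rank_flatten_sumOuter 2 (hflat 2), (act_DT _ _ _).symm⟩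

end Tensor

theorem statement_0_general (n : ℕ) :
    Tensor.orbitD n ℂ =
      {P : Tensor n ℂ | Tensor.rank P = n ∧ ∀ i : Fin 3, (Tensor.flatten i P).rank = n} :=
  Tensor.orbitD_eq_setOf_rank

/-- `𝒟(ℂ)` is exactly the set of `n×n×n` complex tensors of complex tensor
rank `n` and multilinear rank `(n,n,n)`. -/
theorem statement_0 (n : ℕ) (hn : 1 ≤ n) :
    Tensor.orbitD n ℂ =
      {P : Tensor n ℂ | Tensor.rank P = n ∧ ∀ i : Fin 3, (Tensor.flatten i P).rank = n} :=
  statement_0_general n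
end

section
/- Every tensor P in V_n (the closure of the orbit 𝒟(ℂ) in ℂ^{n³}) satisfies, for every i ∈ {1,2,3}, every vector v ∈ ℂⁿ, and all 1 ≤ j < k ≤ n, the commutation relation (P*_i e_j)·adj(P*_i v)·(P*_i e_k) − (P*_i e_k)·adj(P*_i v)·(P*_i e_j) = 0, where adj denotes the classical adjugate matrix and e_j is the j-th standard basis vector. -/
open scoped BigOperators
open Matrix

section Aux

open Tensor

variable {n : ℕ} {K : Type*} [CommRing K]

lemma aux_smul_mid_left (C : Matrix (Fin n) (Fin n) K) (M : Matrix (Fin n) (Fin n) K) :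
    C * (C.adjugate * M) = C.det • M := by
  rw [← Matrix.mul_assoc, Matrix.mul_adjugate, Matrix.smul_mul, Matrix.one_mul]

lemma aux_smul_mid_right (A : Matrix (Fin n) (Fin n) K) (M : Matrix (Fin n) (Fin n) K) :
    A.adjugate * (A * M) = A.det • M := by
  rw [← Matrix.mul_assoc, Matrix.adjugate_mul, Matrix.smul_mul, Matrix.one_mul]

lemma aux_comm (A C : Matrix (Fin n) (Fin n) K) (du dv dw : Fin n → K) :
    (A * Matrix.diagonal du * C) * (A * Matrix.diagonal dv * C).adjugate
        * (A * Matrix.diagonal dw * C)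
      = (A * Matrix.diagonal dw * C) * (A * Matrix.diagonal dv * C).adjugate
        * (A * Matrix.diagonal du * C) := by
  have key : ∀ du dw : Fin n → K,
      (A * Matrix.diagonal du * C) * (A * Matrix.diagonal dv * C).adjugate
          * (A * Matrix.diagonal dw * C)
        = (C.det * A.det) •
          (A * (Matrix.diagonal du * (Matrix.diagonal dv).adjugate * Matrix.diagonal dw) * C) := by
    intro du dw
    rw [Matrix.adjugate_mul_distrib, Matrix.adjugate_mul_distrib]
    simp only [Matrix.mul_assoc, Matrix.smul_mul, Matrix.mul_smul, aux_smul_mid_left,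
      aux_smul_mid_right, smul_smul]
  rw [key, key]
  congr 2
  rw [Matrix.adjugate_diagonal]
  simp only [Matrix.diagonal_mul_diagonal]
  rw [show (fun i => du i * (∏ j ∈ Finset.univ.erase i, dv j) * dw i)
      = fun i => dw i * (∏ j ∈ Finset.univ.erase i, dv j) * du i from funext fun x => by ring]

lemma contr_act_entry0 (g₁ g₂ g₃ : Matrix (Fin n) (Fin n) K) (w : Fin n → K) (j k : Fin n) :
    (∑ a, ((DT n K).act g₁ g₂ g₃) (a, j, k) * w a)
      = (g₂ᵀ * Matrix.diagonal (g₁ *ᵥ w) * g₃) j k := by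
  simp only [act, DT, Matrix.mul_apply, Matrix.transpose_apply, Matrix.diagonal_apply,
    Matrix.mulVec, dotProduct, Finset.sum_mul, Finset.mul_sum, ite_and, ite_mul,
    zero_mul, one_mul, Finset.sum_ite_eq, Finset.sum_ite_eq', Finset.mem_univ, if_true]
  rw [Finset.sum_comm]
  refine Finset.sum_congr rfl fun a _ => ?_
  rw [Finset.sum_comm]
  refine Finset.sum_congr rfl fun c _ => ?_
  by_cases h : a = c
  · subst h
    simp only [if_pos rfl, Finset.sum_ite_eq, Finset.sum_ite_eq', Finset.mem_univ, if_true,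
      Finset.mul_sum, Finset.sum_mul]
    exact Finset.sum_congr rfl fun x _ => by ring
  · simp [h, Ne.symm h]

lemma contr_act_entry1 (g₁ g₂ g₃ : Matrix (Fin n) (Fin n) K) (w : Fin n → K) (j k : Fin n) :
    (∑ b, ((DT n K).act g₁ g₂ g₃) (j, b, k) * w b)
      = (g₁ᵀ * Matrix.diagonal (g₂ *ᵥ w) * g₃) j k := by
  simp only [act, DT, Matrix.mul_apply, Matrix.transpose_apply, Matrix.diagonal_apply,
    Matrix.mulVec, dotProduct, Finset.sum_mul, Finset.mul_sum, ite_and, ite_mul,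
    zero_mul, one_mul, Finset.sum_ite_eq, Finset.sum_ite_eq', Finset.mem_univ, if_true]
  rw [Finset.sum_comm]
  refine Finset.sum_congr rfl fun a _ => ?_
  rw [Finset.sum_comm]
  refine Finset.sum_congr rfl fun c _ => ?_
  by_cases h : a = c
  · subst h
    simp only [if_pos rfl, Finset.sum_ite_eq, Finset.sum_ite_eq', Finset.mem_univ, if_true,
      Finset.mul_sum, Finset.sum_mul]
    exact Finset.sum_congr rfl fun x _ => by ring
  · simp [h, Ne.symm h]

lemma contr_act_entry2 (g₁ g₂ g₃ : Matrix (Fin n) (Fin n) K) (w : Fin n → K) (j k : Fin n) :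
    (∑ c, ((DT n K).act g₁ g₂ g₃) (j, k, c) * w c)
      = (g₁ᵀ * Matrix.diagonal (g₃ *ᵥ w) * g₂) j k := by
  simp only [act, DT, Matrix.mul_apply, Matrix.transpose_apply, Matrix.diagonal_apply,
    Matrix.mulVec, dotProduct, Finset.sum_mul, Finset.mul_sum, ite_and, ite_mul,
    zero_mul, one_mul, Finset.sum_ite_eq, Finset.sum_ite_eq', Finset.mem_univ, if_true]
  rw [Finset.sum_comm]
  refine Finset.sum_congr rfl fun a _ => ?_
  rw [Finset.sum_comm]
  refine Finset.sum_congr rfl fun c _ => ?_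
  by_cases h : a = c
  · subst h
    simp only [if_pos rfl, Finset.sum_ite_eq, Finset.sum_ite_eq', Finset.mem_univ, if_true,
      Finset.mul_sum, Finset.sum_mul]
    exact Finset.sum_congr rfl fun x _ => by ring
  · simp [h, Ne.symm h]

lemma contr_act (g₁ g₂ g₃ : Matrix (Fin n) (Fin n) K) (i : Fin 3) (w : Fin n → K) :
    contr i ((DT n K).act g₁ g₂ g₃) w
      = ![g₂ᵀ * Matrix.diagonal (g₁ *ᵥ w) * g₃,
          g₁ᵀ * Matrix.diagonal (g₂ *ᵥ w) * g₃,
          g₁ᵀ * Matrix.diagonal (g₃ *ᵥ w) * g₂] i := by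
  fin_cases i
  · exact Matrix.ext fun j k => contr_act_entry0 g₁ g₂ g₃ w j k
  · exact Matrix.ext fun j k => contr_act_entry1 g₁ g₂ g₃ w j k
  · exact Matrix.ext fun j k => contr_act_entry2 g₁ g₂ g₃ w j k

lemma commrel_orbit (P : Tensor n K) (hP : P ∈ orbitD n K) (i : Fin 3) : CommRel i P := by
  obtain ⟨g₁, g₂, g₃, -, -, -, rfl⟩ := hP
  intro v j k _
  simp only [Tensor.slice, contr_act]
  fin_cases i <;> simp only [Matrix.cons_val_zero, Matrix.cons_val_one, Matrix.head_cons,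
    Matrix.cons_val_two, Matrix.tail_cons] <;> apply aux_comm

lemma continuous_contr (i : Fin 3) (w : Fin n → ℂ) :
    Continuous fun P : Tensor n ℂ => contr i P w := by
  fin_cases i
  · apply continuous_matrix
    intro a b
    show Continuous fun P : Tensor n ℂ => ∑ c, P (c, a, b) * w c
    exact continuous_finset_sum _ fun c _ => (continuous_apply _).mul continuous_const
  · apply continuous_matrix
    intro a b
    show Continuous fun P : Tensor n ℂ => ∑ c, P (a, c, b) * w c
    exact continuous_finset_sum _ fun c _ => (continuous_apply _).mul continuous_const
  · apply continuous_matrix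
    intro a b
    show Continuous fun P : Tensor n ℂ => ∑ c, P (a, b, c) * w c
    exact continuous_finset_sum _ fun c _ => (continuous_apply _).mul continuous_const

end Aux

/-- every tensor in `V_n` (the closure of `𝒟(ℂ)`) satisfies the commutation
relations in every index. -/
theorem statement_2 (n : ℕ) (P : Tensor n ℂ) (hP : P ∈ closure (Tensor.orbitD n ℂ)) :
    ∀ i : Fin 3, Tensor.CommRel i P := by
  intro i v j k hjk
  have hclosed : IsClosed {Q : Tensor n ℂ |
      Tensor.slice i Q j * (Tensor.contr i Q v).adjugate * Tensor.slice i Q k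
        = Tensor.slice i Q k * (Tensor.contr i Q v).adjugate * Tensor.slice i Q j} := by
    apply isClosed_eq
    · exact ((continuous_contr i _).matrix_mul
        ((continuous_contr i v).matrix_adjugate)).matrix_mul (continuous_contr i _)
    · exact ((continuous_contr i _).matrix_mul
        ((continuous_contr i v).matrix_adjugate)).matrix_mul (continuous_contr i _)
  exact closure_minimal (fun Q hQ => commrel_orbit Q hQ i v j k hjk) hclosed hP
end

section
/- Let P be an n×n×n complex tensor and i ∈ {1,2,3}. Suppose P is i-slice-non-singular (i.e., some ℂ-linear combination of its i-slices is a non-singular matrix) and that P satisfies the commutation relations (P*_i e_j)·adj(P*_i v)·(P*_i e_k) = (P*_i e_k)·adj(P*_i v)·(P*_i e_j) for all v ∈ ℂⁿ and all 1 ≤ j < k ≤ n. Then there exists (g₁,g₂,g₃) ∈ G(ℂ) such that every i-slice of P(g₁,g₂,g₃) is an upper triangular matrix. -/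
open scoped BigOperators
open Matrix

/-!
Fix `v` with `A = P *_i v` invertible. Since `adj A` is a scalar multiple of `A⁻¹`, the
commutation relations say that the matrices `(P *_i e_j) A⁻¹` pairwise commute, so over `ℂ`
there is one `U` making all `U⁻¹ (P *_i e_j) A⁻¹ U` upper triangular. Acting by `(U⁻¹)ᵀ` and
`A⁻¹ U` on the two indices other than `i` turns the `i`-slices of `P` into exactly these matrices.
-/

open Module

namespace Module.End

variable {K V ι : Type*} [Field K] [IsAlgClosed K] [AddCommGroup V] [Module K V]
  [FiniteDimensional K V]

theorem exists_ne_zero_forall_apply_eq_smul_of_commute [Nontrivial V]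
    (f : ι → End K V) (hf : ∀ i j, Commute (f i) (f j)) :
    ∃ w : V, w ≠ 0 ∧ ∀ i, ∃ μ : K, f i w = μ • w := by
  let S : Set (Submodule K V) := {W | W ≠ ⊥ ∧ ∀ i, ∀ x ∈ W, f i x ∈ W}
  obtain ⟨W, ⟨hW, hWf⟩, hmin⟩ :=
    wellFounded_lt.has_min S ⟨⊤, top_ne_bot, fun _ _ _ => Submodule.mem_top⟩
  obtain ⟨w, hwW, hw⟩ := Submodule.exists_mem_ne_zero_of_ne_bot hW
  refine ⟨w, hw, fun i => ?_⟩
  have : Nontrivial W := Submodule.nontrivial_iff_ne_bot.mpr hW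
  obtain ⟨μ, hμ⟩ := exists_eigenvalue ((f i).restrict (hWf i))
  obtain ⟨x, hx⟩ := hμ.exists_hasEigenvector
  -- `E` is again a nonzero common invariant subspace, so `E = W` by minimality of `W`.
  let E := W ⊓ (f i).eigenspace μ
  have hE : E ∈ S := by
    refine ⟨?_, fun j y hy => Submodule.mem_inf.mpr ⟨hWf j y hy.1, ?_⟩⟩
    · refine (Submodule.ne_bot_iff E).mpr ⟨x, Submodule.mem_inf.mpr ⟨x.2, ?_⟩, by simpa using hx.2⟩
      exact mem_eigenspace_iff.mpr (congrArg Subtype.val hx.apply_eq_smul)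
    · have hiy : f i y = μ • y := mem_eigenspace_iff.mp hy.2
      rw [mem_eigenspace_iff, ← mul_apply, (hf i j).eq, mul_apply, hiy, map_smul]
  have hWE : W ≤ E := not_lt_iff_le_imp_ge.mp (hmin E hE) inf_le_left
  exact ⟨μ, mem_eigenspace_iff.mp (hWE hwW).2⟩

theorem exists_dual_ne_zero_forall_mapsTo_ker [Nontrivial V]
    (f : ι → End K V) (hf : ∀ i j, Commute (f i) (f j)) :
    ∃ φ : Dual K V, φ ≠ 0 ∧ ∀ i, Set.MapsTo (f i) (LinearMap.ker φ) (LinearMap.ker φ) := by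
  have hdual : ∀ i j, Commute (f i).dualMap (f j).dualMap := fun i j => by
    rw [commute_iff_eq, mul_eq_comp, mul_eq_comp, LinearMap.dualMap_comp_dualMap,
      LinearMap.dualMap_comp_dualMap, ← mul_eq_comp, ← mul_eq_comp, (hf j i).eq]
  obtain ⟨φ, hφ, heig⟩ := exists_ne_zero_forall_apply_eq_smul_of_commute _ hdual
  refine ⟨φ, hφ, fun i x hx => ?_⟩
  obtain ⟨μ, hμ⟩ := heig i
  have hμx := LinearMap.congr_fun hμ x
  rw [LinearMap.dualMap_apply, LinearMap.smul_apply, hx, smul_zero] at hμx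
  exact hμx

theorem exists_basis_forall_apply_mem_span_Iic {N : ℕ} (hN : finrank K V = N)
    (f : ι → End K V) (hf : ∀ i j, Commute (f i) (f j)) :
    ∃ b : Basis (Fin N) K V, ∀ i j, f i (b j) ∈ Submodule.span K (b '' Set.Iic j) := by
  induction N generalizing V with
  | zero => exact ⟨finBasisOfFinrankEq K V hN, fun _ j => j.elim0⟩
  | succ N ih =>
    -- Triangularize on a common invariant hyperplane `ker φ`, then append a vector outside it.
    have : Nontrivial V := Module.nontrivial_of_finrank_eq_succ hN
    obtain ⟨φ, hφ, hφf⟩ := exists_dual_ne_zero_forall_mapsTo_ker f hf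
    have hH : finrank K (LinearMap.ker φ) = N := by
      have := Module.Dual.finrank_ker_add_one_of_ne_zero hφ
      omega
    set H := LinearMap.ker φ
    obtain ⟨b', hb'⟩ := ih hH (fun i => (f i).restrict (hφf i))
      (fun i j => LinearMap.restrict_commute (hf i j) _ _)
    obtain ⟨y, hy⟩ : ∃ y, φ y ≠ 0 := by simpa [DFunLike.ne_iff] using hφ
    have hli : ∀ c : K, ∀ x ∈ H, c • y + x = 0 → c = 0 := fun c x hx hcx => by
      have := congrArg φ hcx
      rw [map_add, map_smul, LinearMap.mem_ker.mp hx] at this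
      simpa [hy] using this
    have hsp : ∀ z : V, ∃ c : K, z + c • y ∈ H := fun z =>
      ⟨-(φ z / φ y), by
        rw [LinearMap.mem_ker, map_add, map_smul, smul_eq_mul, neg_mul, div_mul_cancel₀ _ hy,
          add_neg_cancel]⟩
    let b := b'.mkFinSnoc y hli hsp
    refine ⟨b, fun i j => ?_⟩
    induction j using Fin.lastCases with
    | last =>
      have hIic : Set.Iic (Fin.last N) = Set.univ := Set.eq_univ_of_forall Fin.le_last
      rw [hIic, Set.image_univ, b.span_eq]
      exact Submodule.mem_top
    | cast j =>
      have := Submodule.mem_map_of_mem (f := H.subtype) (hb' i j)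
      rw [Submodule.map_span] at this
      rw [Basis.coe_mkFinSnoc, Fin.snoc_castSucc]
      refine Submodule.span_mono ?_ this
      rintro _ ⟨_, ⟨a, ha, rfl⟩, rfl⟩
      exact ⟨a.castSucc, Fin.castSucc_le_castSucc_iff.mpr ha, by simp⟩

end Module.End

theorem Matrix.exists_isUnit_det_blockTriangular_of_commute {K ι : Type*} [Field K] [IsAlgClosed K]
    {N : ℕ} (B : ι → Matrix (Fin N) (Fin N) K) (hB : ∀ i j, Commute (B i) (B j)) :
    ∃ U : Matrix (Fin N) (Fin N) K, IsUnit U.det ∧ ∀ i, (U⁻¹ * B i * U).BlockTriangular id := by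
  obtain ⟨b, hb⟩ := Module.End.exists_basis_forall_apply_mem_span_Iic (Module.finrank_fin_fun K)
    (fun i => toLinAlgEquiv' (B i)) (fun i j => (hB i j).map toLinAlgEquiv')
  let e := Pi.basisFun K (Fin N)
  have hinv : (e.toMatrix b)⁻¹ = b.toMatrix e := inv_eq_right_inv (e.toMatrix_mul_toMatrix_flip b)
  refine ⟨e.toMatrix b, isUnit_det_of_right_inverse (e.toMatrix_mul_toMatrix_flip b),
    fun i a c hca => ?_⟩
  have hconj : (e.toMatrix b)⁻¹ * B i * e.toMatrix b = LinearMap.toMatrix b b (toLin' (B i)) := by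
    rw [hinv, ← basis_toMatrix_mul_linearMap_toMatrix_mul_basis_toMatrix b e b e,
      LinearMap.toMatrix_eq_toMatrix', LinearMap.toMatrix'_toLin']
  rw [hconj, LinearMap.toMatrix_apply]
  exact Finsupp.notMem_support_iff.mp fun ha => not_le.mpr hca (b.mem_span_image.mp (hb i c) ha)

namespace Tensor

variable {n : ℕ} {K : Type*} [CommRing K]

theorem slice_zero (P : Tensor n K) (j : Fin n) : slice 0 P j = of fun a b => P (j, a, b) := by
  ext a b
  simp [slice, contr, Pi.single_apply]

theorem slice_one (P : Tensor n K) (j : Fin n) : slice 1 P j = of fun a b => P (a, j, b) := by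
  ext a b
  simp [slice, contr, Pi.single_apply]

theorem slice_two (P : Tensor n K) (j : Fin n) : slice 2 P j = of fun a b => P (a, b, j) := by
  ext a b
  simp [slice, contr, Pi.single_apply]

theorem slice_zero_act_one (P : Tensor n K) (g₂ g₃ : Matrix (Fin n) (Fin n) K) (j : Fin n) :
    slice 0 (P.act 1 g₂ g₃) j = g₂ᵀ * slice 0 P j * g₃ := by
  ext a b
  simp only [slice_zero, act, of_apply, mul_apply, transpose_apply, one_apply,
    mul_ite, ite_mul, mul_one, mul_zero, zero_mul, Finset.sum_ite_irrel,
    Finset.sum_const_zero, Finset.sum_ite_eq', Finset.mem_univ, if_true, Finset.sum_mul]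
  rw [Finset.sum_comm]
  exact Finset.sum_congr rfl fun _ _ => Finset.sum_congr rfl fun _ _ => by ring

theorem slice_one_act_one (P : Tensor n K) (g₁ g₃ : Matrix (Fin n) (Fin n) K) (j : Fin n) :
    slice 1 (P.act g₁ 1 g₃) j = g₁ᵀ * slice 1 P j * g₃ := by
  ext a b
  simp only [slice_one, act, of_apply, mul_apply, transpose_apply, one_apply,
    mul_ite, ite_mul, mul_one, mul_zero, zero_mul, Finset.sum_ite_irrel,
    Finset.sum_const_zero, Finset.sum_ite_eq', Finset.mem_univ, if_true, Finset.sum_mul]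
  rw [Finset.sum_comm]
  exact Finset.sum_congr rfl fun _ _ => Finset.sum_congr rfl fun _ _ => by ring

theorem slice_two_act_one (P : Tensor n K) (g₁ g₂ : Matrix (Fin n) (Fin n) K) (j : Fin n) :
    slice 2 (P.act g₁ g₂ 1) j = g₁ᵀ * slice 2 P j * g₂ := by
  ext a b
  simp only [slice_two, act, of_apply, mul_apply, transpose_apply, one_apply,
    mul_ite, mul_one, mul_zero, Finset.sum_ite_eq', Finset.mem_univ, if_true, Finset.sum_mul]
  rw [Finset.sum_comm]
  exact Finset.sum_congr rfl fun _ _ => Finset.sum_congr rfl fun _ _ => by ring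

theorem exists_slice_act_eq_mul (P : Tensor n K) (i : Fin 3) {L R : Matrix (Fin n) (Fin n) K}
    (hL : IsUnit L.det) (hR : IsUnit R.det) :
    ∃ g₁ g₂ g₃ : Matrix (Fin n) (Fin n) K, IsUnit g₁.det ∧ IsUnit g₂.det ∧ IsUnit g₃.det ∧
      ∀ j, slice i (P.act g₁ g₂ g₃) j = L * slice i P j * R := by
  have hLt : IsUnit Lᵀ.det := by rwa [det_transpose]
  match i with
  | 0 => exact ⟨1, Lᵀ, R, by simp, hLt, hR, by simp [slice_zero_act_one]⟩
  | 1 => exact ⟨Lᵀ, 1, R, hLt, by simp, hR, by simp [slice_one_act_one]⟩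
  | 2 => exact ⟨Lᵀ, R, 1, hLt, hR, by simp, by simp [slice_two_act_one]⟩

theorem CommRel.commute_slice_mul_inv {i : Fin 3} {P : Tensor n K} (h : CommRel i P)
    (v : Fin n → K) (j k : Fin n) :
    Commute (slice i P j * (contr i P v)⁻¹) (slice i P k * (contr i P v)⁻¹) := by
  have hinv : ∀ j k, j < k → slice i P j * (contr i P v)⁻¹ * slice i P k
      = slice i P k * (contr i P v)⁻¹ * slice i P j := fun j k hjk => by
    rw [inv_def, Matrix.mul_smul, Matrix.smul_mul, h v j k hjk, Matrix.mul_smul, Matrix.smul_mul]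
  have hjk : slice i P j * (contr i P v)⁻¹ * slice i P k
      = slice i P k * (contr i P v)⁻¹ * slice i P j := by
    rcases lt_trichotomy j k with hlt | rfl | hgt
    · exact hinv j k hlt
    · rfl
    · exact (hinv k j hgt).symm
  simp only [commute_iff_eq, ← mul_assoc, hjk]

end Tensor

/-- an `i`-slice-non-singular tensor satisfying the commutation relations has
a `G(ℂ)`-orbit representative with all `i`-slices upper triangular. -/
theorem statement_3 (n : ℕ) (P : Tensor n ℂ) (i : Fin 3)
    (hns : ∃ v : Fin n → ℂ, IsUnit (Tensor.contr i P v).det)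
    (hcomm : Tensor.CommRel i P) :
    ∃ g₁ g₂ g₃ : Matrix (Fin n) (Fin n) ℂ,
      IsUnit g₁.det ∧ IsUnit g₂.det ∧ IsUnit g₃.det ∧
      ∀ j a b : Fin n, b < a → Tensor.slice i (P.act g₁ g₂ g₃) j a b = 0 := by
  obtain ⟨v, hA⟩ := hns
  set A := Tensor.contr i P v
  obtain ⟨U, hU, htri⟩ := exists_isUnit_det_blockTriangular_of_commute
    (fun j => Tensor.slice i P j * A⁻¹) (hcomm.commute_slice_mul_inv v)
  have hAU : IsUnit (A⁻¹ * U).det := by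
    rw [det_mul]
    exact (isUnit_nonsing_inv_det A hA).mul hU
  obtain ⟨g₁, g₂, g₃, h₁, h₂, h₃, hslice⟩ :=
    P.exists_slice_act_eq_mul i (isUnit_nonsing_inv_det U hU) hAU
  refine ⟨g₁, g₂, g₃, h₁, h₂, h₃, fun j a b hba => ?_⟩
  rw [hslice, ← Matrix.mul_assoc, Matrix.mul_assoc U⁻¹]
  exact htri j hba
end

section
/- For any n×n×n complex tensor P, any (g₁,g₂,g₃) ∈ G(ℂ), and any i ∈ {1,2,3} with {i,j,k} = {1,2,3}, the polynomial f_i satisfies the transformation law f_i(P(g₁,g₂,g₃); x) = det(g_j)ⁿ · det(g_k)ⁿ · det(g_i)² · f_i(P; g_i x), as an identity of polynomials in the indeterminates x = (x₁,…,xₙ). -/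
open scoped BigOperators
open Matrix

/-!
Contracting the first index of `P(g₁,g₂,g₃)` against `x` gives the matrix
`g₂ᵀ (P *₁ g₁x) g₃`, so `h₁` is multiplied by `det g₂ · det g₃` and composed with `x ↦ g₁x`.
By the chain rule the Hessian of `p(gx)` is `gᵀ H(p)(gx) g`, and scaling `p` by a constant `c`
scales the `n × n` Hessian determinant by `cⁿ`; together these give the law for `f₁`.
The laws for `f₂` and `f₃` are the law for `f₁` applied to `P` with its indices permuted.
-/

theorem Finset.sum_comm_rev₄ {α β γ δ M : Type*} [AddCommMonoid M] (s : Finset α) (t : Finset β)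
    (u : Finset γ) (v : Finset δ) (f : α → β → γ → δ → M) :
    ∑ a ∈ s, ∑ b ∈ t, ∑ c ∈ u, ∑ d ∈ v, f a b c d
      = ∑ d ∈ v, ∑ c ∈ u, ∑ b ∈ t, ∑ a ∈ s, f a b c d :=
  calc ∑ a ∈ s, ∑ b ∈ t, ∑ c ∈ u, ∑ d ∈ v, f a b c d
      = ∑ b ∈ t, ∑ c ∈ u, ∑ d ∈ v, ∑ a ∈ s, f a b c d := by
        rw [Finset.sum_comm]
        refine Finset.sum_congr rfl fun b _ => ?_
        rw [Finset.sum_comm]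
        exact Finset.sum_congr rfl fun c _ => Finset.sum_comm
    _ = ∑ d ∈ v, ∑ c ∈ u, ∑ b ∈ t, ∑ a ∈ s, f a b c d := by
        rw [Finset.sum_comm, Finset.sum_congr rfl fun c _ => Finset.sum_comm]
        exact Finset.sum_comm

namespace MvPolynomial

theorem pderiv_aeval {σ τ R : Type*} [CommSemiring R] [Fintype σ] (f : σ → MvPolynomial τ R)
    (i : τ) (p : MvPolynomial σ R) :
    pderiv i (aeval f p) = ∑ j, pderiv i (f j) * aeval f (pderiv j p) := by
  classical
  induction p using MvPolynomial.induction_on with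
  | C c => simp only [aeval_C, algebraMap_eq, pderiv_C, map_zero, mul_zero, Finset.sum_const_zero]
  | add p q hp hq => simp only [map_add, hp, hq, mul_add, Finset.sum_add_distrib]
  | mul_X p j hp =>
    simp only [map_mul, aeval_X, pderiv_mul, hp, pderiv_X, map_add, mul_add,
      Finset.sum_add_distrib, Finset.sum_mul, Pi.single_apply, mul_ite, mul_one, mul_zero,
      apply_ite (aeval f), map_zero, Finset.sum_ite_eq, Finset.mem_univ, if_true]
    simp only [mul_assoc, mul_comm (aeval f p)]

end MvPolynomial

namespace Tensor

open MvPolynomial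

variable {n : ℕ} {K : Type*} [CommRing K]

theorem substX_det (g : Matrix (Fin n) (Fin n) K)
    (M : Matrix (Fin n) (Fin n) (MvPolynomial (Fin n) K)) :
    substX g M.det = (M.map (substX g)).det :=
  AlgHom.map_det _ M

theorem det_map_C (g : Matrix (Fin n) (Fin n) K) :
    (g.map (C : K → MvPolynomial (Fin n) K)).det = C g.det :=
  (RingHom.map_det C g).symm

theorem pderiv_substX (g : Matrix (Fin n) (Fin n) K) (a : Fin n) (p : MvPolynomial (Fin n) K) :
    pderiv a (substX g p) = ∑ j, C (g j a) * substX g (pderiv j p) := by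
  classical
  simp only [substX, pderiv_aeval, map_sum, pderiv_C_mul, pderiv_X, Pi.single_apply, mul_ite,
    mul_one, mul_zero, Finset.sum_ite_eq', Finset.mem_univ, if_true]

theorem hess_substX (g : Matrix (Fin n) (Fin n) K) (p : MvPolynomial (Fin n) K) :
    hess (substX g p) = gᵀ.map C * (hess p).map (substX g) * g.map C := by
  refine Matrix.ext fun a b => ?_
  simp only [hess, Matrix.mul_apply, Matrix.map_apply, Matrix.transpose_apply, Matrix.of_apply,
    pderiv_substX, map_sum, pderiv_C_mul, Finset.mul_sum, Finset.sum_mul]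
  exact Finset.sum_congr rfl fun j _ => Finset.sum_congr rfl fun i _ => by ring

theorem hess_C_mul (c : K) (p : MvPolynomial (Fin n) K) :
    hess (C c * p) = (C c : MvPolynomial (Fin n) K) • hess p :=
  Matrix.ext fun a b => by simp only [hess, Matrix.of_apply, pderiv_C_mul, Matrix.smul_apply,
    smul_eq_mul]

theorem det_hess_C_mul_substX (c : K) (g : Matrix (Fin n) (Fin n) K)
    (p : MvPolynomial (Fin n) K) :
    (hess (C c * substX g p)).det = C (c ^ n * g.det ^ 2) * substX g (hess p).det := by
  rw [hess_C_mul, Matrix.det_smul, hess_substX, Matrix.det_mul, Matrix.det_mul, ← substX_det,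
    det_map_C, det_map_C, Matrix.det_transpose, Fintype.card_fin]
  simp only [map_mul, map_pow]
  ring

theorem contrX_zero_act (P : Tensor n K) (g₁ g₂ g₃ : Matrix (Fin n) (Fin n) K) :
    contrX 0 (P.act g₁ g₂ g₃) = g₂ᵀ.map C * (contrX 0 P).map (substX g₁) * g₃.map C := by
  refine Matrix.ext fun j k => ?_
  simp only [contrX, act, substX, Matrix.mul_apply, Matrix.map_apply, Matrix.transpose_apply,
    Matrix.of_apply, Matrix.cons_val_zero, map_sum, map_mul, aeval_C, aeval_X, algebraMap_eq,
    Finset.sum_mul, Finset.mul_sum]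
  rw [Finset.sum_comm_rev₄]
  exact Finset.sum_congr rfl fun c _ => Finset.sum_congr rfl fun b _ =>
    Finset.sum_congr rfl fun a' _ => Finset.sum_congr rfl fun a _ => by ring

theorem hpoly_zero_act (P : Tensor n K) (g₁ g₂ g₃ : Matrix (Fin n) (Fin n) K) :
    hpoly 0 (P.act g₁ g₂ g₃) = C (g₂.det * g₃.det) * substX g₁ (hpoly 0 P) := by
  rw [hpoly, contrX_zero_act, Matrix.det_mul, Matrix.det_mul, det_map_C, det_map_C,
    Matrix.det_transpose, hpoly, substX_det, map_mul]
  ring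

theorem fpoly_zero_act (P : Tensor n K) (g₁ g₂ g₃ : Matrix (Fin n) (Fin n) K) :
    fpoly 0 (P.act g₁ g₂ g₃)
      = C (g₂.det ^ n * g₃.det ^ n * g₁.det ^ 2) * substX g₁ (fpoly 0 P) := by
  rw [fpoly, hpoly_zero_act, det_hess_C_mul_substX, fpoly]
  simp only [substX, map_mul, map_pow, map_neg, map_one, mul_pow]
  ring

def moveSecondToFront (P : Tensor n K) : Tensor n K := fun x => P (x.2.1, x.1, x.2.2)

def moveThirdToFront (P : Tensor n K) : Tensor n K := fun x => P (x.2.1, x.2.2, x.1)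

theorem fpoly_one_eq (P : Tensor n K) : fpoly 1 P = fpoly 0 P.moveSecondToFront := by
  have h : contrX 1 P = contrX 0 P.moveSecondToFront := rfl
  rw [fpoly, fpoly, hpoly, hpoly, h]

theorem fpoly_two_eq (P : Tensor n K) : fpoly 2 P = fpoly 0 P.moveThirdToFront := by
  have h : contrX 2 P = contrX 0 P.moveThirdToFront := rfl
  rw [fpoly, fpoly, hpoly, hpoly, h]

theorem moveSecondToFront_act (P : Tensor n K) (g₁ g₂ g₃ : Matrix (Fin n) (Fin n) K) :
    (P.act g₁ g₂ g₃).moveSecondToFront = P.moveSecondToFront.act g₂ g₁ g₃ := by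
  funext x
  simp only [moveSecondToFront, act]
  rw [Finset.sum_comm]
  exact Finset.sum_congr rfl fun b _ => Finset.sum_congr rfl fun a _ =>
    Finset.sum_congr rfl fun c _ => by ring

theorem moveThirdToFront_act (P : Tensor n K) (g₁ g₂ g₃ : Matrix (Fin n) (Fin n) K) :
    (P.act g₁ g₂ g₃).moveThirdToFront = P.moveThirdToFront.act g₃ g₁ g₂ := by
  funext x
  simp only [moveThirdToFront, act]
  rw [Finset.sum_congr rfl fun a _ => Finset.sum_comm, Finset.sum_comm]
  exact Finset.sum_congr rfl fun c _ => Finset.sum_congr rfl fun a _ =>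
    Finset.sum_congr rfl fun b _ => by ring

end Tensor

theorem statement_6_general (n : ℕ) (P : Tensor n ℂ) (g₁ g₂ g₃ : Matrix (Fin n) (Fin n) ℂ) :
    Tensor.fpoly 0 (P.act g₁ g₂ g₃)
        = MvPolynomial.C (g₂.det ^ n * g₃.det ^ n * g₁.det ^ 2)
            * Tensor.substX g₁ (Tensor.fpoly 0 P)
    ∧ Tensor.fpoly 1 (P.act g₁ g₂ g₃)
        = MvPolynomial.C (g₁.det ^ n * g₃.det ^ n * g₂.det ^ 2)
            * Tensor.substX g₂ (Tensor.fpoly 1 P)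
    ∧ Tensor.fpoly 2 (P.act g₁ g₂ g₃)
        = MvPolynomial.C (g₁.det ^ n * g₂.det ^ n * g₃.det ^ 2)
            * Tensor.substX g₃ (Tensor.fpoly 2 P) := by
  refine ⟨Tensor.fpoly_zero_act P g₁ g₂ g₃, ?_, ?_⟩
  · rw [Tensor.fpoly_one_eq, Tensor.fpoly_one_eq, Tensor.moveSecondToFront_act]
    exact Tensor.fpoly_zero_act P.moveSecondToFront g₂ g₁ g₃
  · rw [Tensor.fpoly_two_eq, Tensor.fpoly_two_eq, Tensor.moveThirdToFront_act]
    exact Tensor.fpoly_zero_act P.moveThirdToFront g₃ g₁ g₂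

/-- the transformation law
`f_i(P(g₁,g₂,g₃);x) = det(g_j)ⁿ·det(g_k)ⁿ·det(g_i)²·f_i(P;g_i x)`,
for each `i` with `{i,j,k} = {1,2,3}`. -/
theorem statement_6 (n : ℕ) (P : Tensor n ℂ) (g₁ g₂ g₃ : Matrix (Fin n) (Fin n) ℂ)
    (h₁ : IsUnit g₁.det) (h₂ : IsUnit g₂.det) (h₃ : IsUnit g₃.det) :
    Tensor.fpoly 0 (P.act g₁ g₂ g₃)
        = MvPolynomial.C (g₂.det ^ n * g₃.det ^ n * g₁.det ^ 2)
            * Tensor.substX g₁ (Tensor.fpoly 0 P)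
    ∧ Tensor.fpoly 1 (P.act g₁ g₂ g₃)
        = MvPolynomial.C (g₁.det ^ n * g₃.det ^ n * g₂.det ^ 2)
            * Tensor.substX g₂ (Tensor.fpoly 1 P)
    ∧ Tensor.fpoly 2 (P.act g₁ g₂ g₃)
        = MvPolynomial.C (g₁.det ^ n * g₂.det ^ n * g₃.det ^ 2)
            * Tensor.substX g₃ (Tensor.fpoly 2 P) :=
  statement_6_general n P g₁ g₂ g₃
end

section
/- Define the degree-6 polynomial τ₃ on 3×3×3 complex tensors by τ₃(P) = Σ P_{i₁i₂i₃}P_{j₁j₂j₃}P_{k₁k₂k₃}P_{l₁l₂l₃}P_{m₁m₂m₃}P_{n₁n₂n₃} · ε_{i₁j₁k₁} ε_{j₂k₂l₂} ε_{k₃l₃m₃} ε_{l₁m₁n₁} ε_{m₂n₂i₂} ε_{n₃i₃j₃}, where all 18 indices run from 1 to 3 and ε is the totally antisymmetric Levi-Civita symbol with ε₁₂₃ = 1. Then τ₃(P(g₁,g₂,g₃)) = det(g₁)² det(g₂)² det(g₃)² τ₃(P) for all (g₁,g₂,g₃) ∈ GL(3,ℂ)³, and τ₃(D) = 6 for the diagonal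 tensor D. -/
open scoped BigOperators
open Matrix

namespace Tau3Aux

open Tensor

abbrev T3 := Fin 3 × Fin 3 × Fin 3
abbrev T6 := T3 × T3 × T3 × T3 × T3 × T3

lemma pair {α β : Type*} [Fintype α] [Fintype β] (f : α → ℂ) (g : β → ℂ) :
    (∑ a, f a) * (∑ b, g b) = ∑ x : α × β, f x.1 * g x.2 := by
  rw [Finset.sum_mul_sum, Fintype.sum_prod_type]

lemma prod6 (f₁ f₂ f₃ f₄ f₅ f₆ : T3 → ℂ) :
    (∑ a, f₁ a) * (∑ a, f₂ a) * (∑ a, f₃ a) * (∑ a, f₄ a) * (∑ a, f₅ a) * (∑ a, f₆ a)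
      = ∑ x : T6, f₁ x.1 * f₂ x.2.1 * f₃ x.2.2.1 * f₄ x.2.2.2.1 * f₅ x.2.2.2.2.1
          * f₆ x.2.2.2.2.2 := by
  have h : (∑ a, f₁ a) * (∑ a, f₂ a) * (∑ a, f₃ a) * (∑ a, f₄ a) * (∑ a, f₅ a) * (∑ a, f₆ a)
      = (∑ a, f₁ a) * ((∑ a, f₂ a) * ((∑ a, f₃ a) * ((∑ a, f₄ a) * ((∑ a, f₅ a) * (∑ a, f₆ a))))) := by
    ring
  rw [h, pair f₅ f₆, pair f₄ (fun x : T3 × T3 => f₅ x.1 * f₆ x.2),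
    pair f₃ (fun x : T3 × T3 × T3 => f₄ x.1 * (f₅ x.2.1 * f₆ x.2.2)),
    pair f₂ (fun x : T3 × T3 × T3 × T3 => f₃ x.1 * (f₄ x.2.1 * (f₅ x.2.2.1 * f₆ x.2.2.2))),
    pair f₁ (fun x : T3 × T3 × T3 × T3 × T3 =>
      f₂ x.1 * (f₃ x.2.1 * (f₄ x.2.2.1 * (f₅ x.2.2.2.1 * f₆ x.2.2.2.2))))]
  exact Finset.sum_congr rfl fun x _ => by ring

lemma sum_T6 (F : T3 → T3 → T3 → T3 → T3 → T3 → ℂ) :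
    ∑ x : T6, F x.1 x.2.1 x.2.2.1 x.2.2.2.1 x.2.2.2.2.1 x.2.2.2.2.2
      = ∑ i, ∑ j, ∑ k, ∑ l, ∑ m, ∑ o, F i j k l m o := by
  rw [Fintype.sum_prod_type]; refine Finset.sum_congr rfl fun i _ => ?_
  rw [Fintype.sum_prod_type]; refine Finset.sum_congr rfl fun j _ => ?_
  rw [Fintype.sum_prod_type]; refine Finset.sum_congr rfl fun k _ => ?_
  rw [Fintype.sum_prod_type]; refine Finset.sum_congr rfl fun l _ => ?_
  rw [Fintype.sum_prod_type]

noncomputable def E6 (i j k l m o : T3) : ℂ :=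
  eps i.1 j.1 k.1 * eps j.2.1 k.2.1 l.2.1 * eps k.2.2 l.2.2 m.2.2 *
  eps l.1 m.1 o.1 * eps m.2.1 o.2.1 i.2.1 * eps o.2.2 i.2.2 j.2.2

lemma tau3_eq (P : Tensor 3 ℂ) :
    tau3 P = ∑ x : T6, P x.1 * P x.2.1 * P x.2.2.1 * P x.2.2.2.1 * P x.2.2.2.2.1
        * P x.2.2.2.2.2 * E6 x.1 x.2.1 x.2.2.1 x.2.2.2.1 x.2.2.2.2.1 x.2.2.2.2.2 := by
  rw [sum_T6 (fun i j k l m o => P i * P j * P k * P l * P m * P o * E6 i j k l m o)]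
  unfold tau3
  refine Finset.sum_congr rfl fun i _ => Finset.sum_congr rfl fun j _ =>
    Finset.sum_congr rfl fun k _ => Finset.sum_congr rfl fun l _ =>
    Finset.sum_congr rfl fun m _ => Finset.sum_congr rfl fun o _ => ?_
  simp only [E6, mul_assoc]

def gg (g₁ g₂ g₃ : Matrix (Fin 3) (Fin 3) ℂ) (A u : T3) : ℂ :=
  g₁ A.1 u.1 * g₂ A.2.1 u.2.1 * g₃ A.2.2 u.2.2

lemma act_eq (P : Tensor 3 ℂ) (g₁ g₂ g₃ : Matrix (Fin 3) (Fin 3) ℂ) (x : T3) :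
    P.act g₁ g₂ g₃ x = ∑ A : T3, P A * gg g₁ g₂ g₃ A x := by
  simp only [Tensor.act, gg, Fintype.sum_prod_type, mul_assoc]

noncomputable def FF (g : Matrix (Fin 3) (Fin 3) ℂ) (a b c : Fin 3) (v : T3) : ℂ :=
  eps v.1 v.2.1 v.2.2 * (g a v.1 * g b v.2.1 * g c v.2.2)

lemma key (g : Matrix (Fin 3) (Fin 3) ℂ) (a b c : Fin 3) :
    ∑ v : T3, FF g a b c v = g.det * eps a b c := by
  simp only [FF, Fintype.sum_prod_type]
  fin_cases a <;> fin_cases b <;> fin_cases c <;>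
    simp (config := { decide := true }) [eps, Fin.sum_univ_three, Matrix.det_fin_three] <;> ring

def regroup : T6 ≃ T6 where
  toFun x :=
    ((x.1.1, x.2.1.1, x.2.2.1.1),
     (x.2.1.2.1, x.2.2.1.2.1, x.2.2.2.1.2.1),
     (x.2.2.1.2.2, x.2.2.2.1.2.2, x.2.2.2.2.1.2.2),
     (x.2.2.2.1.1, x.2.2.2.2.1.1, x.2.2.2.2.2.1),
     (x.2.2.2.2.1.2.1, x.2.2.2.2.2.2.1, x.1.2.1),
     (x.2.2.2.2.2.2.2, x.1.2.2, x.2.1.2.2))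
  invFun u :=
    ((u.1.1, u.2.2.2.2.1.2.2, u.2.2.2.2.2.2.1),
     (u.1.2.1, u.2.1.1, u.2.2.2.2.2.2.2),
     (u.1.2.2, u.2.1.2.1, u.2.2.1.1),
     (u.2.2.2.1.1, u.2.1.2.2, u.2.2.1.2.1),
     (u.2.2.2.1.2.1, u.2.2.2.2.1.1, u.2.2.1.2.2),
     (u.2.2.2.1.2.2, u.2.2.2.2.1.2.1, u.2.2.2.2.2.1))
  left_inv x := rfl
  right_inv u := rfl

lemma inner (g₁ g₂ g₃ : Matrix (Fin 3) (Fin 3) ℂ) (y : T6) :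
    ∑ x : T6,
      gg g₁ g₂ g₃ y.1 x.1 * gg g₁ g₂ g₃ y.2.1 x.2.1 * gg g₁ g₂ g₃ y.2.2.1 x.2.2.1 *
        gg g₁ g₂ g₃ y.2.2.2.1 x.2.2.2.1 * gg g₁ g₂ g₃ y.2.2.2.2.1 x.2.2.2.2.1 *
        gg g₁ g₂ g₃ y.2.2.2.2.2 x.2.2.2.2.2 *
        E6 x.1 x.2.1 x.2.2.1 x.2.2.2.1 x.2.2.2.2.1 x.2.2.2.2.2
      = g₁.det ^ 2 * g₂.det ^ 2 * g₃.det ^ 2 *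
          E6 y.1 y.2.1 y.2.2.1 y.2.2.2.1 y.2.2.2.2.1 y.2.2.2.2.2 := by
  have h := Fintype.sum_equiv regroup
    (fun x : T6 =>
      gg g₁ g₂ g₃ y.1 x.1 * gg g₁ g₂ g₃ y.2.1 x.2.1 * gg g₁ g₂ g₃ y.2.2.1 x.2.2.1 *
        gg g₁ g₂ g₃ y.2.2.2.1 x.2.2.2.1 * gg g₁ g₂ g₃ y.2.2.2.2.1 x.2.2.2.2.1 *
        gg g₁ g₂ g₃ y.2.2.2.2.2 x.2.2.2.2.2 *
        E6 x.1 x.2.1 x.2.2.1 x.2.2.2.1 x.2.2.2.2.1 x.2.2.2.2.2)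
    (fun u : T6 =>
      FF g₁ y.1.1 y.2.1.1 y.2.2.1.1 u.1 *
      FF g₂ y.2.1.2.1 y.2.2.1.2.1 y.2.2.2.1.2.1 u.2.1 *
      FF g₃ y.2.2.1.2.2 y.2.2.2.1.2.2 y.2.2.2.2.1.2.2 u.2.2.1 *
      FF g₁ y.2.2.2.1.1 y.2.2.2.2.1.1 y.2.2.2.2.2.1 u.2.2.2.1 *
      FF g₂ y.2.2.2.2.1.2.1 y.2.2.2.2.2.2.1 y.1.2.1 u.2.2.2.2.1 *
      FF g₃ y.2.2.2.2.2.2.2 y.1.2.2 y.2.1.2.2 u.2.2.2.2.2)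
    (fun x => by dsimp only [regroup, Equiv.coe_fn_mk, FF, gg, E6]; ring)
  rw [h, ← prod6 (FF g₁ y.1.1 y.2.1.1 y.2.2.1.1)
      (FF g₂ y.2.1.2.1 y.2.2.1.2.1 y.2.2.2.1.2.1)
      (FF g₃ y.2.2.1.2.2 y.2.2.2.1.2.2 y.2.2.2.2.1.2.2)
      (FF g₁ y.2.2.2.1.1 y.2.2.2.2.1.1 y.2.2.2.2.2.1)
      (FF g₂ y.2.2.2.2.1.2.1 y.2.2.2.2.2.2.1 y.1.2.1)
      (FF g₃ y.2.2.2.2.2.2.2 y.1.2.2 y.2.1.2.2),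
    key, key, key, key, key, key]
  dsimp only [E6]
  ring

lemma covariant (P : Tensor 3 ℂ) (g₁ g₂ g₃ : Matrix (Fin 3) (Fin 3) ℂ) :
    tau3 (P.act g₁ g₂ g₃) = g₁.det ^ 2 * g₂.det ^ 2 * g₃.det ^ 2 * tau3 P := by
  rw [tau3_eq, tau3_eq]
  have step1 : ∀ x : T6,
      P.act g₁ g₂ g₃ x.1 * P.act g₁ g₂ g₃ x.2.1 * P.act g₁ g₂ g₃ x.2.2.1 *
        P.act g₁ g₂ g₃ x.2.2.2.1 * P.act g₁ g₂ g₃ x.2.2.2.2.1 * P.act g₁ g₂ g₃ x.2.2.2.2.2 *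
        E6 x.1 x.2.1 x.2.2.1 x.2.2.2.1 x.2.2.2.2.1 x.2.2.2.2.2
      = ∑ y : T6,
          (P y.1 * P y.2.1 * P y.2.2.1 * P y.2.2.2.1 * P y.2.2.2.2.1 * P y.2.2.2.2.2) *
          (gg g₁ g₂ g₃ y.1 x.1 * gg g₁ g₂ g₃ y.2.1 x.2.1 * gg g₁ g₂ g₃ y.2.2.1 x.2.2.1 *
            gg g₁ g₂ g₃ y.2.2.2.1 x.2.2.2.1 * gg g₁ g₂ g₃ y.2.2.2.2.1 x.2.2.2.2.1 *
            gg g₁ g₂ g₃ y.2.2.2.2.2 x.2.2.2.2.2 *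
            E6 x.1 x.2.1 x.2.2.1 x.2.2.2.1 x.2.2.2.2.1 x.2.2.2.2.2) := by
    intro x
    rw [act_eq, act_eq, act_eq, act_eq, act_eq, act_eq,
      prod6 (fun A => P A * gg g₁ g₂ g₃ A x.1) (fun A => P A * gg g₁ g₂ g₃ A x.2.1)
        (fun A => P A * gg g₁ g₂ g₃ A x.2.2.1) (fun A => P A * gg g₁ g₂ g₃ A x.2.2.2.1)
        (fun A => P A * gg g₁ g₂ g₃ A x.2.2.2.2.1) (fun A => P A * gg g₁ g₂ g₃ A x.2.2.2.2.2),
      Finset.sum_mul]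
    exact Finset.sum_congr rfl fun y _ => by ring
  calc ∑ x : T6, P.act g₁ g₂ g₃ x.1 * P.act g₁ g₂ g₃ x.2.1 * P.act g₁ g₂ g₃ x.2.2.1 *
        P.act g₁ g₂ g₃ x.2.2.2.1 * P.act g₁ g₂ g₃ x.2.2.2.2.1 * P.act g₁ g₂ g₃ x.2.2.2.2.2 *
        E6 x.1 x.2.1 x.2.2.1 x.2.2.2.1 x.2.2.2.2.1 x.2.2.2.2.2
      = ∑ x : T6, ∑ y : T6,
          (P y.1 * P y.2.1 * P y.2.2.1 * P y.2.2.2.1 * P y.2.2.2.2.1 * P y.2.2.2.2.2) *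
          (gg g₁ g₂ g₃ y.1 x.1 * gg g₁ g₂ g₃ y.2.1 x.2.1 * gg g₁ g₂ g₃ y.2.2.1 x.2.2.1 *
            gg g₁ g₂ g₃ y.2.2.2.1 x.2.2.2.1 * gg g₁ g₂ g₃ y.2.2.2.2.1 x.2.2.2.2.1 *
            gg g₁ g₂ g₃ y.2.2.2.2.2 x.2.2.2.2.2 *
            E6 x.1 x.2.1 x.2.2.1 x.2.2.2.1 x.2.2.2.2.1 x.2.2.2.2.2) :=
        Finset.sum_congr rfl fun x _ => step1 x
    _ = ∑ y : T6, ∑ x : T6,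
          (P y.1 * P y.2.1 * P y.2.2.1 * P y.2.2.2.1 * P y.2.2.2.2.1 * P y.2.2.2.2.2) *
          (gg g₁ g₂ g₃ y.1 x.1 * gg g₁ g₂ g₃ y.2.1 x.2.1 * gg g₁ g₂ g₃ y.2.2.1 x.2.2.1 *
            gg g₁ g₂ g₃ y.2.2.2.1 x.2.2.2.1 * gg g₁ g₂ g₃ y.2.2.2.2.1 x.2.2.2.2.1 *
            gg g₁ g₂ g₃ y.2.2.2.2.2 x.2.2.2.2.2 *
            E6 x.1 x.2.1 x.2.2.1 x.2.2.2.1 x.2.2.2.2.1 x.2.2.2.2.2) := Finset.sum_comm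
    _ = ∑ y : T6,
          (P y.1 * P y.2.1 * P y.2.2.1 * P y.2.2.2.1 * P y.2.2.2.2.1 * P y.2.2.2.2.2) *
          (g₁.det ^ 2 * g₂.det ^ 2 * g₃.det ^ 2 *
            E6 y.1 y.2.1 y.2.2.1 y.2.2.2.1 y.2.2.2.2.1 y.2.2.2.2.2) :=
        Finset.sum_congr rfl fun y _ => by rw [← Finset.mul_sum, inner g₁ g₂ g₃ y]
    _ = g₁.det ^ 2 * g₂.det ^ 2 * g₃.det ^ 2 *
          ∑ y : T6, P y.1 * P y.2.1 * P y.2.2.1 * P y.2.2.2.1 * P y.2.2.2.2.1 * P y.2.2.2.2.2 *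
            E6 y.1 y.2.1 y.2.2.1 y.2.2.2.1 y.2.2.2.2.1 y.2.2.2.2.2 := by
        rw [Finset.mul_sum]; exact Finset.sum_congr rfl fun y _ => by ring

end Tau3Aux

namespace Tau3Aux
open Tensor

abbrev F6 := Fin 3 × Fin 3 × Fin 3 × Fin 3 × Fin 3 × Fin 3

def dmap (y : F6) : T6 :=
  ((y.1, y.1, y.1), (y.2.1, y.2.1, y.2.1), (y.2.2.1, y.2.2.1, y.2.2.1),
   (y.2.2.2.1, y.2.2.2.1, y.2.2.2.1), (y.2.2.2.2.1, y.2.2.2.2.1, y.2.2.2.2.1),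
   (y.2.2.2.2.2, y.2.2.2.2.2, y.2.2.2.2.2))

lemma dmap_inj : Function.Injective dmap := by
  intro a b h
  obtain ⟨a1, a2, a3, a4, a5, a6⟩ := a
  obtain ⟨b1, b2, b3, b4, b5, b6⟩ := b
  simp only [dmap, Prod.ext_iff] at h ⊢
  tauto

lemma diag6 (F : T6 → ℂ) :
    ∑ x : T6, DT 3 ℂ x.1 * DT 3 ℂ x.2.1 * DT 3 ℂ x.2.2.1 * DT 3 ℂ x.2.2.2.1 *
        DT 3 ℂ x.2.2.2.2.1 * DT 3 ℂ x.2.2.2.2.2 * F x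
      = ∑ y : F6, F (dmap y) := by
  classical
  calc ∑ x : T6, DT 3 ℂ x.1 * DT 3 ℂ x.2.1 * DT 3 ℂ x.2.2.1 * DT 3 ℂ x.2.2.2.1 *
          DT 3 ℂ x.2.2.2.2.1 * DT 3 ℂ x.2.2.2.2.2 * F x
      = ∑ x ∈ Finset.image dmap Finset.univ, DT 3 ℂ x.1 * DT 3 ℂ x.2.1 * DT 3 ℂ x.2.2.1 *
          DT 3 ℂ x.2.2.2.1 * DT 3 ℂ x.2.2.2.2.1 * DT 3 ℂ x.2.2.2.2.2 * F x := by
        refine (Finset.sum_subset (Finset.subset_univ _) ?_).symm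
        intro x _ hx
        obtain ⟨⟨a1, a2, a3⟩, ⟨b1, b2, b3⟩, ⟨c1, c2, c3⟩, ⟨d1, d2, d3⟩,
          ⟨e1, e2, e3⟩, ⟨f1, f2, f3⟩⟩ := x
        by_contra hW
        apply hx
        simp only [DT] at hW
        have h1 : a1 = a2 ∧ a2 = a3 := by by_contra h; simp [if_neg h] at hW
        have h2 : b1 = b2 ∧ b2 = b3 := by by_contra h; simp [if_neg h] at hW
        have h3 : c1 = c2 ∧ c2 = c3 := by by_contra h; simp [if_neg h] at hW
        have h4 : d1 = d2 ∧ d2 = d3 := by by_contra h; simp [if_neg h] at hW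
        have h5 : e1 = e2 ∧ e2 = e3 := by by_contra h; simp [if_neg h] at hW
        have h6 : f1 = f2 ∧ f2 = f3 := by by_contra h; simp [if_neg h] at hW
        obtain ⟨rfl, rfl⟩ := h1
        obtain ⟨rfl, rfl⟩ := h2
        obtain ⟨rfl, rfl⟩ := h3
        obtain ⟨rfl, rfl⟩ := h4
        obtain ⟨rfl, rfl⟩ := h5
        obtain ⟨rfl, rfl⟩ := h6
        exact Finset.mem_image.mpr ⟨(a1, b1, c1, d1, e1, f1), Finset.mem_univ _, rfl⟩
    _ = ∑ y : F6, DT 3 ℂ (dmap y).1 * DT 3 ℂ (dmap y).2.1 * DT 3 ℂ (dmap y).2.2.1 *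
          DT 3 ℂ (dmap y).2.2.2.1 * DT 3 ℂ (dmap y).2.2.2.2.1 * DT 3 ℂ (dmap y).2.2.2.2.2 *
          F (dmap y) := Finset.sum_image fun a _ b _ h => dmap_inj h
    _ = ∑ y : F6, F (dmap y) := Finset.sum_congr rfl fun y _ => by
          simp [dmap, DT]

def epsz (i j k : Fin 3) : ℤ :=
  if (i, j, k) = ((0 : Fin 3), (1 : Fin 3), (2 : Fin 3)) ∨ (i, j, k) = (1, 2, 0)
      ∨ (i, j, k) = (2, 0, 1) then 1
  else if (i, j, k) = ((2 : Fin 3), (1 : Fin 3), (0 : Fin 3)) ∨ (i, j, k) = (1, 0, 2)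
      ∨ (i, j, k) = (0, 2, 1) then -1
  else 0

lemma eps_cast (i j k : Fin 3) : eps i j k = ((epsz i j k : ℤ) : ℂ) := by
  unfold eps epsz; split_ifs <;> norm_num

set_option maxRecDepth 40000 in
lemma tau3_DT : tau3 (DT 3 ℂ) = 6 := by
  rw [tau3_eq]
  calc ∑ x : T6, DT 3 ℂ x.1 * DT 3 ℂ x.2.1 * DT 3 ℂ x.2.2.1 * DT 3 ℂ x.2.2.2.1 *
          DT 3 ℂ x.2.2.2.2.1 * DT 3 ℂ x.2.2.2.2.2 *
          E6 x.1 x.2.1 x.2.2.1 x.2.2.2.1 x.2.2.2.2.1 x.2.2.2.2.2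
      = ∑ y : F6, eps y.1 y.2.1 y.2.2.1 * eps y.2.1 y.2.2.1 y.2.2.2.1 *
          eps y.2.2.1 y.2.2.2.1 y.2.2.2.2.1 * eps y.2.2.2.1 y.2.2.2.2.1 y.2.2.2.2.2 *
          eps y.2.2.2.2.1 y.2.2.2.2.2 y.1 * eps y.2.2.2.2.2 y.1 y.2.1 :=
        diag6 (fun x => E6 x.1 x.2.1 x.2.2.1 x.2.2.2.1 x.2.2.2.2.1 x.2.2.2.2.2)
    _ = 6 := by
        have hz : (∑ y : F6, epsz y.1 y.2.1 y.2.2.1 * epsz y.2.1 y.2.2.1 y.2.2.2.1 *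
            epsz y.2.2.1 y.2.2.2.1 y.2.2.2.2.1 * epsz y.2.2.2.1 y.2.2.2.2.1 y.2.2.2.2.2 *
            epsz y.2.2.2.2.1 y.2.2.2.2.2 y.1 * epsz y.2.2.2.2.2 y.1 y.2.1) = 6 := by
          simp only [Fintype.sum_prod_type]
          simp (config := { decide := true, maxSteps := 10000000 }) [Fin.sum_univ_three, epsz]
        simp only [eps_cast, ← Int.cast_mul, ← Int.cast_sum, hz]
        norm_num

end Tau3Aux

/-- `τ₃` transforms with weight `(2,2,2)` under `GL(3,ℂ)³` and `τ₃(D) = 6`. -/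
theorem statement_12 :
    (∀ (P : Tensor 3 ℂ) (g₁ g₂ g₃ : Matrix (Fin 3) (Fin 3) ℂ),
      IsUnit g₁.det → IsUnit g₂.det → IsUnit g₃.det →
      Tensor.tau3 (P.act g₁ g₂ g₃)
        = g₁.det ^ 2 * g₂.det ^ 2 * g₃.det ^ 2 * Tensor.tau3 P)
    ∧ Tensor.tau3 (Tensor.DT 3 ℂ) = 6 := by
  constructor
  · intro P g₁ g₂ g₃ _ _ _
    exact Tau3Aux.covariant P g₁ g₂ g₃
  · exact Tau3Aux.tau3_DT
end

section
/- Suppose P is a real n×n×n tensor lying in 𝒟(ℂ), the GL(n,ℂ)³-orbit of the diagonal tensor D. Then, up to a simultaneous permutation of the rows of the three matrices, P can be uniquely expressed as P = D(g₁,g₂,g₃) with g₁,g₂,g₃ ∈ GL(n,ℂ) subject to: (i) the first non-zero entry of every row of g₁ and of g₂ equals 1; and (ii) for some k ≤ n/2, the first 2k rows of each g_i are non-real and not purely imaginary, occurring in complex conjugate pairs (row 2j being the conjugate of row 2j−1 for j = 1,…,k), and the remaining n−2k rows of each g_i are real. Consequently P has a unique decomposition into n complex rank-1 summands, of which 2k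 are non-real, occurring in conjugate pairs, and n−2k are real. -/
open scoped BigOperators
open Matrix

/-!
The stabilizer of `D` in `GL(n)³` consists of triples of monomial matrices with a common
permutation whose scalars multiply to `1`: if `D(A,B,C) = D`, the `j`-th slice
`Bᵀ · diag(A_{·j}) · C` of `D` has rank one, so every column of `A` has exactly one nonzero
entry. Hence two decompositions `D(g) = D(g')` differ by a permutation of the rows and row
rescalings with product one, and normalizing the first nonzero entry of each row of `g₁, g₂`
removes the rescalings. For real `P`, `D(ḡ) = P̄ = P` is another normalized decomposition, so
complex conjugation permutes the rows by an involution `π`. Conjugating `π` to the involution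
swapping `2j` and `2j+1` for `j < k` puts the rows in the required order, and `2k`, the number
of non-real rows of `g₃`, does not depend on the decomposition.
-/

namespace Matrix

variable {ι R : Type*} [Fintype ι]

theorem exists_perm_of_existsUnique_col [Zero R] (A : Matrix ι ι R)
    (hrow : ∀ i, ∃ j, A i j ≠ 0) (hcol : ∀ j, ∃! i, A i j ≠ 0) :
    ∃ π : Equiv.Perm ι, ∀ i j, A i j ≠ 0 ↔ j = π i := by
  choose r hr hr_unique using hcol
  have hsurj : Function.Surjective r := fun i =>
    let ⟨j, hj⟩ := hrow i
    ⟨j, (hr_unique j i hj).symm⟩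
  let e := Equiv.ofBijective r (Finite.surjective_iff_bijective.mp hsurj)
  refine ⟨e.symm, fun i j => ⟨fun h => ?_, fun h => ?_⟩⟩
  · exact e.eq_symm_apply.mpr (hr_unique j i h).symm
  · have hi : r (e.symm i) = i := e.apply_symm_apply i
    rw [h]
    simpa only [hi] using hr (e.symm i)

variable [DecidableEq ι]

theorem exists_ne_zero_of_isUnit_det [CommRing R] [Nontrivial R] {A : Matrix ι ι R}
    (hA : IsUnit A.det) (i : ι) : ∃ j, A i j ≠ 0 := by
  by_contra! h
  exact hA.ne_zero (det_eq_zero_of_row_eq_zero i h)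

theorem row_injective_of_isUnit_det [CommRing R] [Nontrivial R] {A : Matrix ι ι R}
    (hA : IsUnit A.det) : Function.Injective A := by
  intro i j hij
  by_contra hne
  exact hA.ne_zero (det_zero_of_row_eq hne hij)

theorem row_ne_neg_of_isUnit_det [CommRing R] [Nontrivial R] {A : Matrix ι ι R}
    (hA : IsUnit A.det) {i j : ι} (hij : i ≠ j) : A i ≠ -A j := by
  intro h
  refine hA.ne_zero ?_
  rw [← det_updateRow_add_self A hij, h, neg_add_cancel]
  exact det_eq_zero_of_row_eq_zero i fun k => by simp

theorem mul_apply_of_row_eq_single [NonUnitalNonAssocSemiring R] {A : Matrix ι ι R} {i j : ι}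
    {a : R} (hA : A i = Pi.single j a) (g : Matrix ι ι R) (k : ι) :
    (A * g) i k = a * g j k := by
  simp [mul_apply, hA, Pi.single_apply]

end Matrix

namespace Equiv.Perm

variable {α : Type*} [Fintype α] [DecidableEq α]

theorem cycleType_eq_replicate_of_sq_eq_one {σ : Perm α} (hσ : σ ^ 2 = 1) :
    σ.cycleType = Multiset.replicate (σ.support.card / 2) 2 := by
  have h := cycleType_of_pow_prime_eq_one hσ
  have hsum := σ.sum_cycleType
  rw [h, Multiset.sum_replicate, smul_eq_mul] at hsum
  rw [h, ← hsum, Nat.mul_div_cancel _ two_pos]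

theorem isConj_of_sq_eq_one {σ τ : Perm α} (hσ : σ ^ 2 = 1) (hτ : τ ^ 2 = 1)
    (h : σ.support.card = τ.support.card) : IsConj σ τ := by
  rw [isConj_iff_cycleType_eq, cycleType_eq_replicate_of_sq_eq_one hσ,
    cycleType_eq_replicate_of_sq_eq_one hτ, h]

end Equiv.Perm

namespace Tensor

variable {n : ℕ}

section CommRing

variable {K : Type*} [CommRing K]

theorem act_DT_apply (g₁ g₂ g₃ : Matrix (Fin n) (Fin n) K) (x : Fin n × Fin n × Fin n) :
    (DT n K).act g₁ g₂ g₃ x = ∑ i, g₁ i x.1 * g₂ i x.2.1 * g₃ i x.2.2 := by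
  simp [act, DT, ite_and, Finset.sum_ite_eq]

theorem act_one (P : Tensor n K) : P.act 1 1 1 = P := by
  funext x
  simp [act, Matrix.one_apply]

theorem act_DT_act (g₁ g₂ g₃ h₁ h₂ h₃ : Matrix (Fin n) (Fin n) K) :
    ((DT n K).act g₁ g₂ g₃).act h₁ h₂ h₃ = (DT n K).act (g₁ * h₁) (g₂ * h₂) (g₃ * h₃) := by
  funext x
  rw [act, act_DT_apply]
  simp only [act_DT_apply, Finset.sum_mul]
  conv_lhs => enter [2, a]; rw [Finset.sum_comm_cycle]
  rw [Finset.sum_comm]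
  refine Finset.sum_congr rfl fun i _ => ?_
  simp only [Matrix.mul_apply, Finset.sum_mul, Finset.mul_sum]
  conv_lhs => rw [Finset.sum_comm_cycle]; enter [2, c]; rw [Finset.sum_comm]
  exact Finset.sum_congr rfl fun a _ => Finset.sum_congr rfl fun b _ =>
    Finset.sum_congr rfl fun c _ => by ring

theorem act_DT_submatrix (σ : Equiv.Perm (Fin n)) (g₁ g₂ g₃ : Matrix (Fin n) (Fin n) K) :
    (DT n K).act (g₁.submatrix σ id) (g₂.submatrix σ id) (g₃.submatrix σ id)
      = (DT n K).act g₁ g₂ g₃ := by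
  funext x
  simp only [act_DT_apply, Matrix.submatrix_apply, id]
  exact Equiv.sum_comp σ fun i => g₁ i x.1 * g₂ i x.2.1 * g₃ i x.2.2

theorem act_DT_diagonal_mul {a b c : Fin n → K} (habc : ∀ i, a i * b i * c i = 1)
    (g₁ g₂ g₃ : Matrix (Fin n) (Fin n) K) :
    (DT n K).act (Matrix.diagonal a * g₁) (Matrix.diagonal b * g₂) (Matrix.diagonal c * g₃)
      = (DT n K).act g₁ g₂ g₃ := by
  funext x
  simp only [act_DT_apply, Matrix.diagonal_mul]
  exact Finset.sum_congr rfl fun i _ => by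
    linear_combination g₁ i x.1 * g₂ i x.2.1 * g₃ i x.2.2 * habc i

end CommRing

section Field

variable {K : Type*} [Field K]

theorem existsUnique_col_ne_zero_of_act_DT_eq_DT {A B C : Matrix (Fin n) (Fin n) K}
    (hB : IsUnit B.det) (hC : IsUnit C.det) (hD : (DT n K).act A B C = DT n K) (j : Fin n) :
    ∃! i, A i j ≠ 0 := by
  classical
  have hslice : Bᵀ * Matrix.diagonal (fun i => A i j) * C
      = Matrix.diagonal (Pi.single j 1) := by
    ext k l
    have h := congr_fun hD (j, k, l)
    simp only [act_DT_apply, DT] at h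
    rw [Matrix.mul_apply]
    simp only [Matrix.mul_diagonal, Matrix.transpose_apply, Matrix.diagonal_apply, Pi.single_apply]
    simp_rw [mul_comm (B _ k) (A _ j)]
    rw [h]
    split_ifs <;> simp_all
  have hrank := congrArg Matrix.rank hslice
  rw [Matrix.rank_mul_eq_left_of_isUnit_det _ _ hC,
    Matrix.rank_mul_eq_right_of_isUnit_det _ _ (by rwa [Matrix.det_transpose]),
    Matrix.rank_diagonal, Matrix.rank_diagonal] at hrank
  have hsingle : Fintype.card {i // (Pi.single j 1 : Fin n → K) i ≠ 0} = 1 := by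
    simp [Pi.single_apply]
  obtain ⟨⟨i, hi⟩, hunique⟩ := Fintype.card_eq_one_iff.mp (hrank.trans hsingle)
  exact ⟨i, hi, fun i' hi' => congrArg Subtype.val (hunique ⟨i', hi'⟩)⟩

theorem exists_monomial_of_act_DT_eq_DT {A B C : Matrix (Fin n) (Fin n) K}
    (hA : IsUnit A.det) (hB : IsUnit B.det) (hC : IsUnit C.det)
    (hD : (DT n K).act A B C = DT n K) :
    ∃ (π : Equiv.Perm (Fin n)) (a b c : Fin n → K), (∀ i, a i * b i * c i = 1) ∧
      (∀ i, A i = Pi.single (π i) (a i)) ∧ (∀ i, B i = Pi.single (π i) (b i)) ∧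
      (∀ i, C i = Pi.single (π i) (c i)) := by
  obtain ⟨π, hπ⟩ := A.exists_perm_of_existsUnique_col (Matrix.exists_ne_zero_of_isUnit_det hA)
    (existsUnique_col_ne_zero_of_act_DT_eq_DT hB hC hD)
  have hA_row : ∀ i, A i = Pi.single (π i) (A i (π i)) := fun i => funext fun j => by
    by_cases hj : j = π i
    · simp [hj]
    · simpa [Pi.single_apply, hj] using mt (hπ i j).mp hj
  -- only the summand `i` survives in the entry `(π i, k, l)` of `D(A,B,C) = D`
  have hrow : ∀ i k l, A i (π i) * B i k * C i l = if π i = k ∧ k = l then 1 else 0 := by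
    intro i k l
    have h := congr_fun hD (π i, k, l)
    simp only [act_DT_apply, DT] at h
    rw [← h, Finset.sum_eq_single i]
    · intro i' _ hi'
      rw [hA_row i', Pi.single_eq_of_ne (fun h => hi' (π.injective h).symm), zero_mul, zero_mul]
    · simp
  have hprod : ∀ i, A i (π i) * B i (π i) * C i (π i) = 1 := fun i => by
    simpa using hrow i (π i) (π i)
  have hA_ne : ∀ i, A i (π i) ≠ 0 := fun i h0 => by simpa [h0] using hprod i
  have hB_ne : ∀ i, B i (π i) ≠ 0 := fun i h0 => by simpa [h0] using hprod i
  have hC_ne : ∀ i, C i (π i) ≠ 0 := fun i h0 => by simpa [h0] using hprod i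
  refine ⟨π, fun i => A i (π i), fun i => B i (π i), fun i => C i (π i), hprod, hA_row,
    fun i => funext fun k => ?_, fun i => funext fun l => ?_⟩
  · by_cases hk : k = π i
    · simp [hk]
    · rw [Pi.single_eq_of_ne hk]
      simpa [Ne.symm hk, hA_ne, hC_ne] using hrow i k (π i)
  · by_cases hl : l = π i
    · simp [hl]
    · rw [Pi.single_eq_of_ne hl]
      simpa [Ne.symm hl, hA_ne, hB_ne] using hrow i (π i) l

theorem row_eq_of_mul_inv_row_eq_single {g g' : Matrix (Fin n) (Fin n) K} (hg : IsUnit g.det)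
    {π : Equiv.Perm (Fin n)} {e : Fin n → K} (h : ∀ i, (g' * g⁻¹) i = Pi.single (π i) (e i))
    (m c : Fin n) : g' m c = e m * g (π m) c := by
  rw [← Matrix.mul_apply_of_row_eq_single (h m), Matrix.nonsing_inv_mul_cancel_right _ _ hg]

theorem exists_perm_of_act_DT_eq {g₁ g₂ g₃ g₁' g₂' g₃' : Matrix (Fin n) (Fin n) K}
    (hg₁ : IsUnit g₁.det) (hg₂ : IsUnit g₂.det) (hg₃ : IsUnit g₃.det)
    (hg₁' : IsUnit g₁'.det) (hg₂' : IsUnit g₂'.det) (hg₃' : IsUnit g₃'.det)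
    (h : (DT n K).act g₁' g₂' g₃' = (DT n K).act g₁ g₂ g₃) :
    ∃ (π : Equiv.Perm (Fin n)) (e₁ e₂ e₃ : Fin n → K), (∀ m, e₁ m * e₂ m * e₃ m = 1) ∧
      (∀ m c, g₁' m c = e₁ m * g₁ (π m) c) ∧ (∀ m c, g₂' m c = e₂ m * g₂ (π m) c) ∧
      (∀ m c, g₃' m c = e₃ m * g₃ (π m) c) := by
  have hunit : ∀ {g g' : Matrix (Fin n) (Fin n) K}, IsUnit g.det → IsUnit g'.det →
      IsUnit (g' * g⁻¹).det := fun hg hg' => by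
    rw [Matrix.det_mul]
    exact hg'.mul (Matrix.isUnit_nonsing_inv_det _ hg)
  have hD : (DT n K).act (g₁' * g₁⁻¹) (g₂' * g₂⁻¹) (g₃' * g₃⁻¹) = DT n K := by
    rw [← act_DT_act, h, act_DT_act, Matrix.mul_nonsing_inv _ hg₁, Matrix.mul_nonsing_inv _ hg₂,
      Matrix.mul_nonsing_inv _ hg₃, act_one]
  obtain ⟨π, e₁, e₂, e₃, he, h₁, h₂, h₃⟩ := exists_monomial_of_act_DT_eq_DT
    (hunit hg₁ hg₁') (hunit hg₂ hg₂') (hunit hg₃ hg₃') hD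
  exact ⟨π, e₁, e₂, e₃, he, row_eq_of_mul_inv_row_eq_single hg₁ h₁,
    row_eq_of_mul_inv_row_eq_single hg₂ h₂, row_eq_of_mul_inv_row_eq_single hg₃ h₃⟩

end Field

theorem exists_first_ne_zero {R : Type*} [Zero R] (u : Fin n → R) (hu : ∃ c, u c ≠ 0) :
    ∃ c, u c ≠ 0 ∧ ∀ c' < c, u c' = 0 := by
  obtain ⟨c, hc, hmin⟩ := wellFounded_lt.has_min {c | u c ≠ 0} hu
  exact ⟨c, hc, fun c' hc' => by_contra fun h => hmin c' h hc'⟩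

variable {P : Tensor n ℂ} {g₁ g₂ g₃ : Matrix (Fin n) (Fin n) ℂ}

theorem FirstNonzeroOne.eq_one_of_row_eq_mul {g g' : Matrix (Fin n) (Fin n) ℂ}
    (hg : FirstNonzeroOne g) (hg' : FirstNonzeroOne g') {m m' : Fin n} {e : ℂ} (he : e ≠ 0)
    (hrow : ∃ c, g m c ≠ 0) (h : ∀ c, g' m' c = e * g m c) : e = 1 := by
  obtain ⟨c, hc, hbefore⟩ := exists_first_ne_zero (g m) hrow
  have hgc : g m c = 1 := hg m c hc hbefore
  have hg'c := hg' m' c (by simp [h, hgc, he]) fun c' hc' => by simp [h, hbefore c' hc']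
  simpa [h, hgc] using hg'c

theorem exists_firstNonzeroOne_diagonal_mul {g : Matrix (Fin n) (Fin n) ℂ}
    (hg : IsUnit g.det) : ∃ a : Fin n → ℂ, (∀ m, a m ≠ 0) ∧
      FirstNonzeroOne (Matrix.diagonal a * g) := by
  choose c hc hbefore using fun m => exists_first_ne_zero (g m)
    (Matrix.exists_ne_zero_of_isUnit_det hg m)
  refine ⟨fun m => (g m (c m))⁻¹, fun m => inv_ne_zero (hc m), fun r c' hne hzero => ?_⟩
  simp only [Matrix.diagonal_mul, mul_eq_zero, inv_eq_zero, ne_eq, not_or] at hne hzero ⊢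
  obtain hlt | rfl | hgt := lt_trichotomy c' (c r)
  · exact absurd (hbefore r c' hlt) hne.2
  · exact inv_mul_cancel₀ (hc r)
  · exact absurd (hzero (c r) hgt) (by simp [hc r])

/-- A decomposition `P = D(g₁,g₂,g₃)` normalized as in condition (i). -/
structure IsNormalizedDecomp (P : Tensor n ℂ) (g₁ g₂ g₃ : Matrix (Fin n) (Fin n) ℂ) : Prop where
  isUnit_det₁ : IsUnit g₁.det
  isUnit_det₂ : IsUnit g₂.det
  isUnit_det₃ : IsUnit g₃.det
  eq_act : P = (DT n ℂ).act g₁ g₂ g₃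
  firstNonzeroOne₁ : FirstNonzeroOne g₁
  firstNonzeroOne₂ : FirstNonzeroOne g₂

theorem exists_isNormalizedDecomp (hP : P ∈ orbitD n ℂ) :
    ∃ g₁ g₂ g₃, IsNormalizedDecomp P g₁ g₂ g₃ := by
  obtain ⟨g₁, g₂, g₃, hg₁, hg₂, hg₃, rfl⟩ := hP
  obtain ⟨a, ha, hfno₁⟩ := exists_firstNonzeroOne_diagonal_mul hg₁
  obtain ⟨b, hb, hfno₂⟩ := exists_firstNonzeroOne_diagonal_mul hg₂
  have hunit : ∀ {d : Fin n → ℂ} {g : Matrix (Fin n) (Fin n) ℂ}, (∀ m, d m ≠ 0) →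
      IsUnit g.det → IsUnit (Matrix.diagonal d * g).det := fun hd hg => by
    rw [Matrix.det_mul, Matrix.det_diagonal]
    exact (isUnit_iff_ne_zero.mpr (Finset.prod_ne_zero_iff.mpr fun m _ => hd m)).mul hg
  refine ⟨_, _, Matrix.diagonal (fun m => (a m * b m)⁻¹) * g₃,
    ⟨hunit ha hg₁, hunit hb hg₂, hunit (fun m => inv_ne_zero (mul_ne_zero (ha m) (hb m))) hg₃,
      (act_DT_diagonal_mul (fun m => ?_) g₁ g₂ g₃).symm, hfno₁, hfno₂⟩⟩
  exact mul_inv_cancel₀ (mul_ne_zero (ha m) (hb m))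

theorem IsNormalizedDecomp.exists_perm {g₁' g₂' g₃' : Matrix (Fin n) (Fin n) ℂ}
    (h : IsNormalizedDecomp P g₁ g₂ g₃) (h' : IsNormalizedDecomp P g₁' g₂' g₃') :
    ∃ π : Equiv.Perm (Fin n), (∀ m c, g₁' m c = g₁ (π m) c) ∧
      (∀ m c, g₂' m c = g₂ (π m) c) ∧ (∀ m c, g₃' m c = g₃ (π m) c) := by
  obtain ⟨π, e₁, e₂, e₃, he, h₁, h₂, h₃⟩ := exists_perm_of_act_DT_eq h.isUnit_det₁
    h.isUnit_det₂ h.isUnit_det₃ h'.isUnit_det₁ h'.isUnit_det₂ h'.isUnit_det₃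
    (h'.eq_act.symm.trans h.eq_act)
  have he₁ : ∀ m, e₁ m = 1 := fun m => h.firstNonzeroOne₁.eq_one_of_row_eq_mul
    h'.firstNonzeroOne₁ (fun h0 => by simpa [h0] using he m)
    (Matrix.exists_ne_zero_of_isUnit_det h.isUnit_det₁ (π m)) (h₁ m)
  have he₂ : ∀ m, e₂ m = 1 := fun m => h.firstNonzeroOne₂.eq_one_of_row_eq_mul
    h'.firstNonzeroOne₂ (fun h0 => by simpa [h0] using he m)
    (Matrix.exists_ne_zero_of_isUnit_det h.isUnit_det₂ (π m)) (h₂ m)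
  have he₃ : ∀ m, e₃ m = 1 := fun m => by simpa [he₁, he₂] using he m
  exact ⟨π, by simpa [he₁] using h₁, by simpa [he₂] using h₂, by simpa [he₃] using h₃⟩

def pairSwap (k : ℕ) (hk : 2 * k ≤ n) : Equiv.Perm (Fin n) :=
  Function.Involutive.toPerm
    (fun m => if h : (m : ℕ) < 2 * k then
      ⟨if (m : ℕ) % 2 = 0 then (m : ℕ) + 1 else (m : ℕ) - 1, by split_ifs <;> omega⟩ else m)
    (fun m => by
      apply Fin.ext
      dsimp only
      split_ifs <;> dsimp only <;> split_ifs <;> dsimp only <;> omega)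

section pairSwap

variable {k : ℕ} {hk : 2 * k ≤ n}

theorem val_pairSwap (m : Fin n) : (pairSwap k hk m : ℕ)
    = if (m : ℕ) < 2 * k then (if (m : ℕ) % 2 = 0 then (m : ℕ) + 1 else (m : ℕ) - 1) else m := by
  dsimp only [pairSwap, Function.Involutive.toPerm, Equiv.coe_fn_mk]
  split_ifs <;> rfl

theorem pairSwap_apply_ne {m : Fin n} (hm : (m : ℕ) < 2 * k) : pairSwap k hk m ≠ m := by
  intro h
  have := congrArg Fin.val h
  rw [val_pairSwap] at this
  split_ifs at this <;> omega

theorem pairSwap_apply_of_le {m : Fin n} (hm : 2 * k ≤ (m : ℕ)) : pairSwap k hk m = m := by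
  apply Fin.ext
  rw [val_pairSwap, if_neg (by omega)]

theorem pairSwap_apply_of_even {m m' : Fin n} (hm : (m : ℕ) < 2 * k) (heven : Even (m : ℕ))
    (hm' : (m' : ℕ) = m + 1) : pairSwap k hk m = m' := by
  apply Fin.ext
  rw [val_pairSwap, if_pos hm, if_pos (Nat.even_iff.mp heven), hm']

theorem pairSwap_sq : pairSwap k hk ^ 2 = 1 := by
  ext m
  rw [sq, Equiv.Perm.mul_apply, val_pairSwap, val_pairSwap]
  split_ifs <;> simp <;> omega

theorem card_support_pairSwap : (pairSwap k hk).support.card = 2 * k := by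
  have h : (pairSwap k hk).support = Finset.univ.filter (fun m : Fin n => (m : ℕ) < 2 * k) := by
    ext m
    rw [Equiv.Perm.mem_support, Finset.mem_filter]
    exact ⟨fun h => ⟨Finset.mem_univ m, by_contra fun h' => h (pairSwap_apply_of_le (by omega))⟩,
      fun h => pairSwap_apply_ne h.2⟩
  rw [h, Fin.card_filter_val_lt]
  omega

end pairSwap

theorem exists_pairSwap_conj {π : Equiv.Perm (Fin n)} (hπ : π ^ 2 = 1) :
    ∃ (k : ℕ) (hk : 2 * k ≤ n) (ρ : Equiv.Perm (Fin n)), ∀ m, π (ρ m) = ρ (pairSwap k hk m) := by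
  have hdvd := Equiv.Perm.two_dvd_card_support hπ
  have hk : 2 * (π.support.card / 2) ≤ n := by
    rw [Nat.mul_div_cancel' hdvd]
    simpa using π.support.card_le_univ
  obtain ⟨c, hc⟩ := isConj_iff.mp <| Equiv.Perm.isConj_of_sq_eq_one hπ pairSwap_sq
    (by rw [card_support_pairSwap, Nat.mul_div_cancel' hdvd] : _ = (pairSwap _ hk).support.card)
  exact ⟨_, hk, c⁻¹, fun m => by simp [← hc]⟩

theorem act_DT_map_conj (g₁ g₂ g₃ : Matrix (Fin n) (Fin n) ℂ) :
    (DT n ℂ).act (g₁.map (starRingEnd ℂ)) (g₂.map (starRingEnd ℂ)) (g₃.map (starRingEnd ℂ))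
      = fun x => starRingEnd ℂ ((DT n ℂ).act g₁ g₂ g₃ x) := by
  funext x
  simp [act_DT_apply, map_sum]

theorem FirstNonzeroOne.map_conj {g : Matrix (Fin n) (Fin n) ℂ} (hg : FirstNonzeroOne g) :
    FirstNonzeroOne (g.map (starRingEnd ℂ)) := fun r c hc hbefore => by
  have hc' : g r c ≠ 0 := fun h0 => hc (by simp [h0])
  have hbefore' : ∀ c' < c, g r c' = 0 := fun c' hc' => by simpa using hbefore c' hc'
  simp [hg r c hc' hbefore']

theorem IsNormalizedDecomp.map_conj (hP : IsReal P) (h : IsNormalizedDecomp P g₁ g₂ g₃) :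
    IsNormalizedDecomp P (g₁.map (starRingEnd ℂ)) (g₂.map (starRingEnd ℂ))
      (g₃.map (starRingEnd ℂ)) where
  isUnit_det₁ := (RingHom.map_det (starRingEnd ℂ) g₁).symm ▸ h.isUnit_det₁.map _
  isUnit_det₂ := (RingHom.map_det (starRingEnd ℂ) g₂).symm ▸ h.isUnit_det₂.map _
  isUnit_det₃ := (RingHom.map_det (starRingEnd ℂ) g₃).symm ▸ h.isUnit_det₃.map _
  eq_act := by
    rw [act_DT_map_conj, ← h.eq_act]
    exact funext fun x => (Complex.conj_eq_iff_im.mpr (hP x)).symm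
  firstNonzeroOne₁ := h.firstNonzeroOne₁.map_conj
  firstNonzeroOne₂ := h.firstNonzeroOne₂.map_conj

theorem IsNormalizedDecomp.submatrix (h : IsNormalizedDecomp P g₁ g₂ g₃) (ρ : Equiv.Perm (Fin n)) :
    IsNormalizedDecomp P (g₁.submatrix ρ id) (g₂.submatrix ρ id) (g₃.submatrix ρ id) := by
  have hunit : ∀ {g : Matrix (Fin n) (Fin n) ℂ}, IsUnit g.det → IsUnit (g.submatrix ρ id).det :=
    fun hg => by
      rw [Matrix.det_permute]
      exact (isUnit_iff_ne_zero.mpr (by simp)).mul hg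
  exact ⟨hunit h.isUnit_det₁, hunit h.isUnit_det₂, hunit h.isUnit_det₃,
    h.eq_act.trans (act_DT_submatrix ρ g₁ g₂ g₃).symm,
    fun r c => h.firstNonzeroOne₁ (ρ r) c, fun r c => h.firstNonzeroOne₂ (ρ r) c⟩

section ConjRows

variable {g : Matrix (Fin n) (Fin n) ℂ} {π : Equiv.Perm (Fin n)}

theorem sq_eq_one_of_conj_row (hg : IsUnit g.det)
    (hconj : ∀ m c, starRingEnd ℂ (g m c) = g (π m) c) : π ^ 2 = 1 := by
  ext m
  have hrow : g (π (π m)) = g m := funext fun c => by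
    rw [← hconj (π m) c, ← hconj m c, Complex.conj_conj]
  rw [sq, Equiv.Perm.mul_apply, Matrix.row_injective_of_isUnit_det hg hrow]
  rfl

theorem im_eq_zero_of_conj_row (hconj : ∀ m c, starRingEnd ℂ (g m c) = g (π m) c) {m : Fin n}
    (hm : π m = m) (c : Fin n) : (g m c).im = 0 :=
  Complex.conj_eq_iff_im.mp (by rw [hconj, hm])

theorem exists_im_ne_zero_of_conj_row (hg : IsUnit g.det)
    (hconj : ∀ m c, starRingEnd ℂ (g m c) = g (π m) c) {m : Fin n} (hm : π m ≠ m) :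
    ∃ c, (g m c).im ≠ 0 := by
  by_contra! h
  exact hm (Matrix.row_injective_of_isUnit_det hg (funext fun c => by
    rw [← hconj, Complex.conj_eq_iff_im.mpr (h c)]))

theorem exists_re_ne_zero_of_conj_row (hg : IsUnit g.det)
    (hconj : ∀ m c, starRingEnd ℂ (g m c) = g (π m) c) {m : Fin n} (hm : π m ≠ m) :
    ∃ c, (g m c).re ≠ 0 := by
  by_contra! h
  exact Matrix.row_ne_neg_of_isUnit_det hg hm (funext fun c => by
    rw [← hconj]
    apply Complex.ext <;> simp [h c])

theorem conjPairStructure_submatrix (hg : IsUnit g.det)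
    (hconj : ∀ m c, starRingEnd ℂ (g m c) = g (π m) c) {k : ℕ} {hk : 2 * k ≤ n}
    {ρ : Equiv.Perm (Fin n)} (hρ : ∀ m, π (ρ m) = ρ (pairSwap k hk m)) :
    ConjPairStructure k (g.submatrix ρ id) := by
  have hpaired : ∀ m : Fin n, (m : ℕ) < 2 * k → π (ρ m) ≠ ρ m := fun m hm => by
    rw [hρ, ne_eq, ρ.apply_eq_iff_eq]
    exact pairSwap_apply_ne hm
  refine ⟨fun m m' hm heven hm' c => ?_, fun m hm => ⟨?_, ?_⟩, fun m hm c => ?_⟩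
  · simp [hconj, hρ, pairSwap_apply_of_even hm heven hm']
  · exact exists_im_ne_zero_of_conj_row hg hconj (hpaired m hm)
  · exact exists_re_ne_zero_of_conj_row hg hconj (hpaired m hm)
  · exact im_eq_zero_of_conj_row hconj (by rw [hρ, pairSwap_apply_of_le hm]) c

end ConjRows

theorem ConjPairStructure.exists_im_ne_zero_iff {k : ℕ} {g : Matrix (Fin n) (Fin n) ℂ}
    (h : ConjPairStructure k g) (m : Fin n) : (∃ c, (g m c).im ≠ 0) ↔ (m : ℕ) < 2 * k := by
  obtain ⟨-, hpaired, hreal⟩ := h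
  exact ⟨fun ⟨c, hc⟩ => by_contra fun hm => hc (hreal m (by omega) c), fun hm => (hpaired m hm).1⟩

theorem ConjPairStructure.card_nonreal_rows {k : ℕ} {g : Matrix (Fin n) (Fin n) ℂ}
    (h : ConjPairStructure k g) (hk : 2 * k ≤ n) :
    Nat.card {m // ∃ c, (g m c).im ≠ 0} = 2 * k := by
  rw [Nat.card_congr (Equiv.subtypeEquivRight h.exists_im_ne_zero_iff), Nat.card_eq_fintype_card,
    Fintype.card_subtype, Fin.card_filter_val_lt]
  omega

theorem ConjPairStructure.eq_of_row_eq {k k' : ℕ} {g g' : Matrix (Fin n) (Fin n) ℂ}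
    (h : ConjPairStructure k g) (h' : ConjPairStructure k' g') (hk : 2 * k ≤ n)
    (hk' : 2 * k' ≤ n) {σ : Equiv.Perm (Fin n)} (hσ : ∀ m c, g' m c = g (σ m) c) : k' = k := by
  have hcard := Nat.card_congr (σ.subtypeEquiv fun m => by simp only [hσ] :
    {m // ∃ c, (g' m c).im ≠ 0} ≃ {m // ∃ c, (g m c).im ≠ 0})
  rw [h'.card_nonreal_rows hk', h.card_nonreal_rows hk] at hcard
  omega

theorem exists_sigDecomp (hreal : IsReal P) (hP : P ∈ orbitD n ℂ) :
    ∃ k g₁ g₂ g₃, SigDecomp P k g₁ g₂ g₃ := by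
  obtain ⟨g₁, g₂, g₃, hg⟩ := exists_isNormalizedDecomp hP
  -- the conjugate decomposition is again normalized, so it only permutes the rows
  obtain ⟨π, h₁, h₂, h₃⟩ := hg.exists_perm (hg.map_conj hreal)
  obtain ⟨k, hk, ρ, hρ⟩ := exists_pairSwap_conj (sq_eq_one_of_conj_row hg.isUnit_det₁ h₁)
  have hgρ := hg.submatrix ρ
  exact ⟨k, _, _, _, hk, hgρ.isUnit_det₁, hgρ.isUnit_det₂, hgρ.isUnit_det₃, hgρ.eq_act,
    hgρ.firstNonzeroOne₁, hgρ.firstNonzeroOne₂,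
    conjPairStructure_submatrix hg.isUnit_det₁ h₁ hρ,
    conjPairStructure_submatrix hg.isUnit_det₂ h₂ hρ,
    conjPairStructure_submatrix hg.isUnit_det₃ h₃ hρ⟩

theorem SigDecomp.isNormalizedDecomp {k : ℕ} (h : SigDecomp P k g₁ g₂ g₃) :
    IsNormalizedDecomp P g₁ g₂ g₃ := by
  obtain ⟨-, hg₁, hg₂, hg₃, hP, hfno₁, hfno₂, -⟩ := h
  exact ⟨hg₁, hg₂, hg₃, hP, hfno₁, hfno₂⟩

theorem SigDecomp.unique {k k' : ℕ} {g₁' g₂' g₃' : Matrix (Fin n) (Fin n) ℂ}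
    (h : SigDecomp P k g₁ g₂ g₃) (h' : SigDecomp P k' g₁' g₂' g₃') :
    k' = k ∧ ∃ σ : Equiv.Perm (Fin n), (∀ m c, g₁' m c = g₁ (σ m) c) ∧
      (∀ m c, g₂' m c = g₂ (σ m) c) ∧ (∀ m c, g₃' m c = g₃ (σ m) c) := by
  obtain ⟨σ, h₁, h₂, h₃⟩ := h.isNormalizedDecomp.exists_perm h'.isNormalizedDecomp
  obtain ⟨hk, -, -, -, -, -, -, -, -, hc₃⟩ := h
  obtain ⟨hk', -, -, -, -, -, -, -, -, hc₃'⟩ := h'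
  exact ⟨hc₃.eq_of_row_eq hc₃' hk hk' h₃, σ, h₁, h₂, h₃⟩

end Tensor

/-- a real tensor `P ∈ 𝒟(ℂ)` has an expression `P = D(g₁,g₂,g₃)` normalized
as in conditions (i) and (ii), unique up to a simultaneous permutation of the rows of the
`gᵢ`. -/
theorem statement_15 (n : ℕ) (P : Tensor n ℂ) (hreal : Tensor.IsReal P)
    (hP : P ∈ Tensor.orbitD n ℂ) :
    ∃ (k : ℕ) (g₁ g₂ g₃ : Matrix (Fin n) (Fin n) ℂ),
      Tensor.SigDecomp P k g₁ g₂ g₃ ∧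
      ∀ (k' : ℕ) (g₁' g₂' g₃' : Matrix (Fin n) (Fin n) ℂ),
        Tensor.SigDecomp P k' g₁' g₂' g₃' →
        k' = k ∧ ∃ σ : Equiv.Perm (Fin n),
          (∀ m c, g₁' m c = g₁ (σ m) c) ∧ (∀ m c, g₂' m c = g₂ (σ m) c)
          ∧ (∀ m c, g₃' m c = g₃ (σ m) c) := by
  obtain ⟨k, g₁, g₂, g₃, hsig⟩ := Tensor.exists_sigDecomp hreal hP
  exact ⟨k, g₁, g₂, g₃, hsig, fun _ _ _ _ hsig' => hsig.unique hsig'⟩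
end
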